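/- arXiv:1704.05530 — 6 statements merged into one kernel-verified Lean document; each statement's English description precedes it below -/
import Mathlib

section
/- Let I be a countable set and P a row-stochastic matrix on I which is irreducible and aperiodic and admits an invariant probability distribution π. Then for any initial probability distribution λ on I and any state j ∈ I, the quantity Σ_{i∈I} λ_i (P^n)(i,j) converges to π_j as n → ∞. In particular, (P^n)(i,j) → π_j for all states i, j. -/
/-!
Coupling. Run two independent copies of the chain, one started from `λ` and one from `π`.
Irreducibility and aperiodicity make the product chain irreducible, and `π ⊗ π` is an invariant
probability for it, so by Kac's inequality it reaches a fixed diagonal state `(a, a)` with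
`π a > 0` almost surely. From that moment on the two copies may be identified, so `λPⁿ(j)` and
`π(j) = πPⁿ(j)` differ by at most the probability that `(a, a)` has not been reached by time
`n`, which tends to `0`. All computations take place in `ℝ≥0∞`, where every series has a sum.
-/

open Filter Topology ENNReal

section

variable {α : Type*}

theorem AddSubmonoid.eventually_mem_of_setGcd_eq_one (M : AddSubmonoid ℕ)
    (hM : Nat.setGcd M = 1) : ∀ᶠ n in atTop, n ∈ M := by
  obtain ⟨N, hN⟩ := Nat.exists_mem_closure_of_ge (M : Set ℕ)
  filter_upwards [eventually_ge_atTop N] with n hn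
  simpa using hN n hn (hM ▸ one_dvd n)

theorem ENNReal.tsum_mul_tsum {β : Type*} (f : α → ℝ≥0∞) (g : β → ℝ≥0∞) :
    (∑' a, f a) * ∑' b, g b = ∑' p : α × β, f p.1 * g p.2 := by
  rw [ENNReal.tsum_prod']
  simp_rw [ENNReal.tsum_mul_left, ENNReal.tsum_mul_right]

theorem ENNReal.tendsto_tsum_of_dominated_convergence {F : ℕ → α → ℝ≥0∞}
    {f bound : α → ℝ≥0∞} (h_bound : ∀ n a, F n a ≤ bound a) (h_fin : ∑' a, bound a ≠ ⊤)
    (h_lim : ∀ a, Tendsto (F · a) atTop (𝓝 (f a))) :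
    Tendsto (fun n => ∑' a, F n a) atTop (𝓝 (∑' a, f a)) := by
  let _ : MeasurableSpace α := ⊤
  simp_rw [← MeasureTheory.lintegral_count' measurable_from_top]
  refine MeasureTheory.tendsto_lintegral_of_dominated_convergence bound
    (fun _ => measurable_from_top) (fun n => .of_forall (h_bound n)) ?_ (.of_forall h_lim)
  rwa [MeasureTheory.lintegral_count' measurable_from_top]

theorem ENNReal.tendsto_tsum_mul_of_tendsto_zero {w : α → ℝ≥0∞} (hw : ∑' a, w a ≠ ⊤)
    {v : ℕ → α → ℝ≥0∞} (hv_le : ∀ n a, v n a ≤ 1) (hv : ∀ a, Tendsto (v · a) atTop (𝓝 0)) :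
    Tendsto (fun n => ∑' a, w a * v n a) atTop (𝓝 0) := by
  simpa using ENNReal.tendsto_tsum_of_dominated_convergence (bound := w)
    (fun n a => mul_le_of_le_one_right' (hv_le n a)) hw
    fun a => ENNReal.Tendsto.const_mul (hv a) (Or.inr (ENNReal.ne_top_of_tsum_ne_top hw a))

theorem ENNReal.tendsto_of_le_add_of_le_add {l : Filter α} {f d e : α → ℝ≥0∞}
    {c : ℝ≥0∞} (hc : c ≠ ⊤) (hfd : ∀ n, f n ≤ c + d n) (hcf : ∀ n, c ≤ f n + e n)
    (hd : Tendsto d l (𝓝 0)) (he : Tendsto e l (𝓝 0)) : Tendsto f l (𝓝 c) := by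
  refine tendsto_of_tendsto_of_tendsto_of_le_of_le (g := fun n => c - e n)
    (h := fun n => c + d n) ?_ ?_ (fun n => tsub_le_iff_right.2 (hcf n)) hfd
  · simpa using ENNReal.Tendsto.sub tendsto_const_nhds he (Or.inl hc)
  · simpa using tendsto_const_nhds.add hd

theorem ENNReal.tsum_ofReal_eq_one {f : α → ℝ} (hf : ∀ a, 0 ≤ f a) (h : ∑' a, f a = 1) :
    ∑' a, ENNReal.ofReal (f a) = 1 := by
  have hs : Summable f := by
    by_contra hs
    simp [tsum_eq_zero_of_not_summable hs] at h
  rw [← ENNReal.ofReal_tsum_of_nonneg hf hs, h, ENNReal.ofReal_one]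

theorem ENNReal.toReal_tsum_ofReal_mul {f : α → ℝ} (hf : ∀ a, 0 ≤ f a) {g : α → ℝ≥0∞}
    (hg : ∀ a, g a ≠ ⊤) :
    (∑' a, ENNReal.ofReal (f a) * g a).toReal = ∑' a, f a * (g a).toReal := by
  rw [ENNReal.tsum_toReal_eq fun a => mul_ne_top ofReal_ne_top (hg a)]
  simp [ENNReal.toReal_mul, hf]

end

namespace MarkovChain

variable {J : Type*}

open Classical in
noncomputable def kernelPow (K : J → J → ℝ≥0∞) : ℕ → J → J → ℝ≥0∞
  | 0 => fun x y => if x = y then 1 else 0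
  | n + 1 => fun x y => ∑' z, kernelPow K n x z * K z y

section kernelPow

variable (K : J → J → ℝ≥0∞)

theorem kernelPow_succ (n : ℕ) (x y : J) :
    kernelPow K (n + 1) x y = ∑' z, kernelPow K n x z * K z y := rfl

@[simp]
theorem kernelPow_one : kernelPow K 1 = K := by
  ext x y
  simp [kernelPow]

theorem kernelPow_add (m n : ℕ) (x y : J) :
    kernelPow K (m + n) x y = ∑' z, kernelPow K m x z * kernelPow K n z y := by
  induction n generalizing y with
  | zero => simp [kernelPow]
  | succ n ih =>
    simp_rw [← add_assoc, kernelPow_succ, ih, ← ENNReal.tsum_mul_right,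
      ← ENNReal.tsum_mul_left, mul_assoc]
    exact ENNReal.tsum_comm

theorem kernelPow_succ' (n : ℕ) (x y : J) :
    kernelPow K (n + 1) x y = ∑' z, K x z * kernelPow K n z y := by
  rw [add_comm, kernelPow_add, kernelPow_one]

theorem tsum_kernelPow_le_one (hK : ∀ x, ∑' y, K x y ≤ 1) (n : ℕ) (x : J) :
    ∑' y, kernelPow K n x y ≤ 1 := by
  induction n generalizing x with
  | zero => simp [kernelPow]
  | succ n ih =>
    calc ∑' y, kernelPow K (n + 1) x y = ∑' z, K x z * ∑' y, kernelPow K n z y := by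
          simp_rw [kernelPow_succ', ← ENNReal.tsum_mul_left]
          exact ENNReal.tsum_comm
      _ ≤ ∑' z, K x z * 1 := by gcongr with z; exact ih z
      _ ≤ 1 := by simpa using hK x

theorem kernelPow_le_one (hK : ∀ x, ∑' y, K x y ≤ 1) (n : ℕ) (x y : J) :
    kernelPow K n x y ≤ 1 :=
  (ENNReal.le_tsum y).trans (tsum_kernelPow_le_one K hK n x)

theorem kernelPow_ne_top (hK : ∀ x, ∑' y, K x y ≤ 1) (n : ℕ) (x y : J) :
    kernelPow K n x y ≠ ⊤ :=
  ne_top_of_le_ne_top one_ne_top (kernelPow_le_one K hK n x y)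

theorem tsum_mul_le_tsum (hK : ∀ x, ∑' y, K x y ≤ 1) (μ : J → ℝ≥0∞) (y : J) :
    ∑' x, μ x * K x y ≤ ∑' x, μ x :=
  ENNReal.tsum_le_tsum fun x => mul_le_of_le_one_right' ((ENNReal.le_tsum y).trans (hK x))

theorem tsum_mul_kernelPow {μ : J → ℝ≥0∞} (hμ : ∀ y, ∑' x, μ x * K x y = μ y)
    (n : ℕ) (y : J) : ∑' x, μ x * kernelPow K n x y = μ y := by
  induction n generalizing y with
  | zero => simp [kernelPow]
  | succ n ih =>
    simp_rw [kernelPow_succ, ← ENNReal.tsum_mul_left, ← mul_assoc]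
    rw [ENNReal.tsum_comm]
    simp_rw [ENNReal.tsum_mul_right, ih, hμ]

theorem kernelPow_add_pos {m n : ℕ} {x y z : J} (hm : 0 < kernelPow K m x z)
    (hn : 0 < kernelPow K n z y) : 0 < kernelPow K (m + n) x y := by
  rw [kernelPow_add]
  exact (ENNReal.mul_pos hm.ne' hn.ne').trans_le (ENNReal.le_tsum z)

theorem exists_pos_of_kernelPow_succ_pos {n : ℕ} {x y : J} (h : 0 < kernelPow K (n + 1) x y) :
    ∃ z, 0 < kernelPow K n x z ∧ 0 < K z y := by
  obtain ⟨z, hz⟩ : ∃ z, kernelPow K n x z * K z y ≠ 0 := by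
    by_contra! h0
    exact h.ne' (ENNReal.tsum_eq_zero.2 h0)
  rw [mul_ne_zero_iff] at hz
  exact ⟨z, pos_iff_ne_zero.2 hz.1, pos_iff_ne_zero.2 hz.2⟩

def returnTimes (i : J) : AddSubmonoid ℕ where
  carrier := {n | 0 < kernelPow K n i i}
  zero_mem' := by simp [kernelPow]
  add_mem' ha hb := kernelPow_add_pos K ha hb

def IsIrreducible : Prop := ∀ i j, ∃ n, 0 < kernelPow K n i j

def IsAperiodic : Prop := ∀ i, Nat.setGcd (returnTimes K i) = 1

theorem eventually_kernelPow_pos {i j : J} (hi : Nat.setGcd (returnTimes K i) = 1) {m : ℕ}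
    (hij : 0 < kernelPow K m i j) : ∀ᶠ n in atTop, 0 < kernelPow K n i j := by
  obtain ⟨N, hN⟩ := eventually_atTop.1 ((returnTimes K i).eventually_mem_of_setGcd_eq_one hi)
  filter_upwards [eventually_ge_atTop (N + m)] with n hn
  rw [show n = (n - m) + m by omega]
  exact kernelPow_add_pos K (hN _ (by omega)) hij

end kernelPow

noncomputable def prodKernel (K : J → J → ℝ≥0∞) : J × J → J × J → ℝ≥0∞ :=
  fun x y => K x.1 y.1 * K x.2 y.2

open Classical in
noncomputable def killAt (K : J → J → ℝ≥0∞) (b : J) : J → J → ℝ≥0∞ :=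
  fun x y => if y = b then 0 else K x y

/-- The probability of not visiting `b` at the times `1, …, n` (time `0` does not count). -/
noncomputable def survivalProb (K : J → J → ℝ≥0∞) (b : J) (n : ℕ) (x : J) : ℝ≥0∞ :=
  ∑' y, kernelPow (killAt K b) n x y

section prodKernel

variable (K : J → J → ℝ≥0∞)

theorem kernelPow_prodKernel (n : ℕ) (x y : J × J) :
    kernelPow (prodKernel K) n x y = kernelPow K n x.1 y.1 * kernelPow K n x.2 y.2 := by
  induction n generalizing y with
  | zero =>
    simp only [kernelPow]
    split_ifs <;> simp_all [Prod.ext_iff]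
  | succ n ih =>
    simp only [kernelPow_succ, ih, prodKernel, ENNReal.tsum_mul_tsum]
    congr 1 with z
    ring

theorem tsum_prodKernel (hK : ∀ x, ∑' y, K x y = 1) (x : J × J) :
    ∑' y, prodKernel K x y = 1 := by
  simp [prodKernel, ← ENNReal.tsum_mul_tsum, hK]

theorem tsum_mul_prodKernel {π : J → ℝ≥0∞} (hπ : ∀ y, ∑' x, π x * K x y = π y)
    (y : J × J) : ∑' x : J × J, π x.1 * π x.2 * prodKernel K x y = π y.1 * π y.2 := by
  rw [← hπ y.1, ← hπ y.2, ENNReal.tsum_mul_tsum]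
  congr 1 with x
  simp only [prodKernel]
  ring

theorem IsIrreducible.prodKernel {K : J → J → ℝ≥0∞} (hirr : IsIrreducible K)
    (hap : IsAperiodic K) : IsIrreducible (prodKernel K) := by
  intro x y
  obtain ⟨m₁, h₁⟩ := hirr x.1 y.1
  obtain ⟨m₂, h₂⟩ := hirr x.2 y.2
  obtain ⟨n, hn₁, hn₂⟩ :=
    ((eventually_kernelPow_pos K (hap _) h₁).and (eventually_kernelPow_pos K (hap _) h₂)).exists
  exact ⟨n, by rw [kernelPow_prodKernel]; exact ENNReal.mul_pos hn₁.ne' hn₂.ne'⟩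

theorem tsum_prodKernel_mul_fst {x : J × J} (hx : ∑' y, K x.2 y = 1) (f : J → ℝ≥0∞) :
    ∑' y : J × J, prodKernel K x y * f y.1 = ∑' k, K x.1 k * f k := by
  calc ∑' y : J × J, prodKernel K x y * f y.1
      = ∑' y : J × J, K x.1 y.1 * f y.1 * K x.2 y.2 := by
        congr 1 with y
        simp only [prodKernel]
        ring
    _ = ∑' k, K x.1 k * f k := by
        rw [← ENNReal.tsum_mul_tsum (fun k => K x.1 k * f k) (K x.2), hx, mul_one]

theorem tsum_prodKernel_mul_snd {x : J × J} (hx : ∑' y, K x.1 y = 1) (f : J → ℝ≥0∞) :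
    ∑' y : J × J, prodKernel K x y * f y.2 = ∑' k, K x.2 k * f k := by
  calc ∑' y : J × J, prodKernel K x y * f y.2
      = ∑' y : J × J, K x.1 y.1 * (K x.2 y.2 * f y.2) := by
        congr 1 with y
        simp only [prodKernel]
        ring
    _ = ∑' k, K x.2 k * f k := by
        rw [← ENNReal.tsum_mul_tsum (K x.1) (fun k => K x.2 k * f k), hx, one_mul]

end prodKernel

section survivalProb

variable (K : J → J → ℝ≥0∞) (b : J)

theorem tsum_killAt_le (x : J) : ∑' y, killAt K b x y ≤ ∑' y, K x y :=
  ENNReal.tsum_le_tsum fun y => by unfold killAt; split_ifs <;> simp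

@[simp]
theorem survivalProb_zero (x : J) : survivalProb K b 0 x = 1 := by
  simp [survivalProb, kernelPow]

theorem survivalProb_le_one (hK : ∀ x, ∑' y, K x y ≤ 1) (n : ℕ) (x : J) :
    survivalProb K b n x ≤ 1 :=
  tsum_kernelPow_le_one _ (fun x => (tsum_killAt_le K b x).trans (hK x)) n x

theorem survivalProb_add (m n : ℕ) (x : J) :
    survivalProb K b (m + n) x = ∑' z, kernelPow (killAt K b) m x z * survivalProb K b n z := by
  simp_rw [survivalProb, kernelPow_add, ← ENNReal.tsum_mul_left]
  exact ENNReal.tsum_comm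

theorem survivalProb_succ (n : ℕ) (x : J) :
    survivalProb K b (n + 1) x = ∑' z, killAt K b x z * survivalProb K b n z := by
  rw [add_comm, survivalProb_add, kernelPow_one]

variable {K} {μ : J → ℝ≥0∞} (hμ : ∀ y, ∑' x, μ x * K x y ≤ μ y)
include hμ

/-- Kac's inequality; `∑' n, survivalProb K b n b` is the expected return time to `b`. -/
theorem mul_tsum_survivalProb_self_le : μ b * ∑' n, survivalProb K b n b ≤ ∑' x, μ x := by
  classical
  set S : ℕ → ℝ≥0∞ := fun n => ∑' x, μ x * survivalProb K b n x
  have step : ∀ n, S (n + 1) + μ b * survivalProb K b n b ≤ S n := by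
    intro n
    have hkill : ∀ z, ∑' x, μ x * killAt K b x z ≤ if z = b then 0 else μ z := by
      intro z
      by_cases hz : z = b <;> simp [killAt, hz, hμ z]
    calc S (n + 1) + μ b * survivalProb K b n b
        = ∑' z, (∑' x, μ x * killAt K b x z) * survivalProb K b n z
            + μ b * survivalProb K b n b := by
          simp_rw [S, survivalProb_succ, ← ENNReal.tsum_mul_left, ← ENNReal.tsum_mul_right,
            mul_assoc]
          rw [ENNReal.tsum_comm]
      _ ≤ ∑' z, (if z = b then 0 else μ z) * survivalProb K b n z
            + μ b * survivalProb K b n b := by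
          gcongr with z
          exact hkill z
      _ = S n := by
          rw [show S n = _ from
              ENNReal.tsum_eq_add_tsum_ite (f := fun z => μ z * survivalProb K b n z) b,
            add_comm]
          congr 2 with z
          split_ifs <;> simp
  have partial_sums :
      ∀ N, ∑ n ∈ Finset.range N, μ b * survivalProb K b n b + S N ≤ S 0 := by
    intro N
    induction N with
    | zero => simp
    | succ N ih =>
      calc ∑ n ∈ Finset.range (N + 1), μ b * survivalProb K b n b + S (N + 1)
          = ∑ n ∈ Finset.range N, μ b * survivalProb K b n b
              + (S (N + 1) + μ b * survivalProb K b N b) := by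
            rw [Finset.sum_range_succ]; ring
        _ ≤ ∑ n ∈ Finset.range N, μ b * survivalProb K b n b + S N := by gcongr; exact step N
        _ ≤ S 0 := ih
  rw [← ENNReal.tsum_mul_left]
  refine ENNReal.tsum_le_of_sum_range_le fun N => ?_
  calc ∑ n ∈ Finset.range N, μ b * survivalProb K b n b ≤ S 0 :=
        le_self_add.trans (partial_sums N)
    _ = ∑' x, μ x := by simp [S]

theorem tendsto_survivalProb_self (hμ_fin : ∑' x, μ x ≠ ⊤) (hb : μ b ≠ 0) :
    Tendsto (survivalProb K b · b) atTop (𝓝 0) := by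
  refine ENNReal.tendsto_atTop_zero_of_tsum_ne_top fun h => hμ_fin (top_le_iff.1 ?_)
  simpa [h, ENNReal.mul_top hb] using mul_tsum_survivalProb_self_le b hμ

end survivalProb

section recurrence

variable (K : J → J → ℝ≥0∞) {b : J}

theorem exists_kernelPow_killAt_pos {x : J} (hx : x ≠ b) {n : ℕ} (h : 0 < kernelPow K n b x) :
    ∃ m, 0 < kernelPow (killAt K b) m b x := by
  induction n generalizing x with
  | zero => simp [kernelPow, hx.symm] at h
  | succ n ih =>
    obtain ⟨z, hz, hzx⟩ := exists_pos_of_kernelPow_succ_pos K h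
    have hkill : killAt K b z x = K z x := if_neg hx
    by_cases hzb : z = b
    · subst hzb
      exact ⟨1, by rwa [kernelPow_one, hkill]⟩
    · obtain ⟨m, hm⟩ := ih hzb hz
      exact ⟨m + 1, kernelPow_add_pos _ hm (by rwa [kernelPow_one, hkill])⟩

variable {K} {μ : J → ℝ≥0∞}

theorem tendsto_survivalProb (hK : ∀ x, ∑' y, K x y ≤ 1)
    (hμ : ∀ y, ∑' x, μ x * K x y ≤ μ y) (hμ_fin : ∑' x, μ x ≠ ⊤) (hb : μ b ≠ 0) {x : J}
    (hx : ∃ n, 0 < kernelPow K n b x) :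
    Tendsto (survivalProb K b · x) atTop (𝓝 0) := by
  have hbb := tendsto_survivalProb_self b hμ hμ_fin hb
  by_cases hxb : x = b
  · exact hxb ▸ hbb
  obtain ⟨n, hn⟩ := hx
  obtain ⟨m, hm⟩ := exists_kernelPow_killAt_pos K hxb hn
  set c := kernelPow (killAt K b) m b x
  have hc : c ≠ ⊤ := kernelPow_ne_top _ (fun x => (tsum_killAt_le K b x).trans (hK x)) m b x
  -- Go from `b` to `x` avoiding `b`, then survive `k` more steps.
  have hle : ∀ k, survivalProb K b k x ≤ c⁻¹ * survivalProb K b (k + m) b := fun k => by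
    rw [← ENNReal.mul_le_iff_le_inv hm.ne' hc, add_comm, survivalProb_add]
    exact ENNReal.le_tsum x
  have hlim : Tendsto (fun k => c⁻¹ * survivalProb K b (k + m) b) atTop (𝓝 0) := by
    simpa using ENNReal.Tendsto.const_mul (hbb.comp (tendsto_add_atTop_nat m))
      (Or.inr (ENNReal.inv_ne_top.2 hm.ne'))
  exact tendsto_of_tendsto_of_tendsto_of_le_of_le tendsto_const_nhds hlim (fun _ => zero_le) hle

end recurrence

theorem eq_toReal_kernelPow {K : J → J → ℝ≥0∞} (hK : ∀ x, ∑' y, K x y ≤ 1)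
    {Q : ℕ → J → J → ℝ} (h_one : ∀ x y, Q 1 x y = (K x y).toReal)
    (h_succ : ∀ n x y, Q (n + 1) x y = ∑' z, Q n x z * (K z y).toReal) {n : ℕ} (hn : 1 ≤ n)
    (x y : J) : Q n x y = (kernelPow K n x y).toReal := by
  induction n, hn using Nat.le_induction generalizing x y with
  | base => rw [h_one, kernelPow_one]
  | succ n hn ih =>
    have hK_ne_top : ∀ z, K z y ≠ ⊤ := fun z => by simpa using kernelPow_ne_top K hK 1 z y
    rw [h_succ, kernelPow_succ, ENNReal.tsum_toReal_eq fun z =>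
      mul_ne_top (kernelPow_ne_top K hK n x z) (hK_ne_top z)]
    simp_rw [ih, ENNReal.toReal_mul]

section coupling

variable {K : J → J → ℝ≥0∞} (hK : ∀ x, ∑' y, K x y = 1)
include hK

theorem kernelPow_le_add_survivalProb {b : J × J} (hb : b.1 = b.2) (n : ℕ) (x : J × J) (j : J) :
    kernelPow K n x.1 j ≤ kernelPow K n x.2 j + survivalProb (prodKernel K) b n x := by
  induction n generalizing x with
  | zero =>
    rw [survivalProb_zero]
    exact (kernelPow_le_one K (fun x => (hK x).le) 0 x.1 j).trans le_add_self
  | succ n ih =>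
    calc kernelPow K (n + 1) x.1 j = ∑' y, prodKernel K x y * kernelPow K n y.1 j := by
          rw [kernelPow_succ', tsum_prodKernel_mul_fst K (hK _) (kernelPow K n · j)]
      _ ≤ ∑' y, (prodKernel K x y * kernelPow K n y.2 j
            + killAt (prodKernel K) b x y * survivalProb (prodKernel K) b n y) := by
          refine ENNReal.tsum_le_tsum fun y => ?_
          by_cases hy : y = b
          · simp [killAt, hy, hb]
          · simp only [killAt, if_neg hy, ← mul_add]
            gcongr
            exact ih y
      _ = kernelPow K (n + 1) x.2 j + survivalProb (prodKernel K) b (n + 1) x := by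
          rw [ENNReal.tsum_add, tsum_prodKernel_mul_snd K (hK _) (kernelPow K n · j),
            ← kernelPow_succ', survivalProb_succ]

theorem tendsto_survivalProb_prodKernel (hirr : IsIrreducible K) (hap : IsAperiodic K)
    {π : J → ℝ≥0∞} (hπ_sum : ∑' x, π x = 1) (hπ : ∀ y, ∑' x, π x * K x y = π y) {a : J}
    (ha : π a ≠ 0) (x : J × J) :
    Tendsto (survivalProb (prodKernel K) (a, a) · x) atTop (𝓝 0) :=
  tendsto_survivalProb (fun x => (tsum_prodKernel K hK x).le)
    (fun y => (tsum_mul_prodKernel K hπ y).le)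
    (by rw [← ENNReal.tsum_mul_tsum, hπ_sum, one_mul]; exact one_ne_top) (mul_ne_zero ha ha)
    (hirr.prodKernel hap _ x)

theorem tendsto_tsum_mul_kernelPow (hirr : IsIrreducible K) (hap : IsAperiodic K)
    {π : J → ℝ≥0∞} (hπ_sum : ∑' x, π x = 1) (hπ : ∀ y, ∑' x, π x * K x y = π y)
    {ν : J → ℝ≥0∞} (hν_sum : ∑' x, ν x = 1) (j : J) :
    Tendsto (fun n => ∑' i, ν i * kernelPow K n i j) atTop (𝓝 (π j)) := by
  obtain ⟨a, ha⟩ : ∃ a, π a ≠ 0 := by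
    by_contra! h
    simp [h] at hπ_sum
  set u := survivalProb (prodKernel K) (a, a)
  have hu := tendsto_survivalProb_prodKernel hK hirr hap hπ_sum hπ ha
  have hu_le : ∀ n x, u n x ≤ 1 := survivalProb_le_one _ _ fun x => (tsum_prodKernel K hK x).le
  set w : J × J → ℝ≥0∞ := fun x => ν x.1 * π x.2
  have hw_fin : ∑' x, w x ≠ ⊤ := by
    rw [← ENNReal.tsum_mul_tsum, hν_sum, hπ_sum, one_mul]
    exact one_ne_top
  -- Both sides are averages against `ν ⊗ π`, so the coupling bound applies termwise.
  have hν_eq : ∀ n, ∑' i, ν i * kernelPow K n i j = ∑' x, w x * kernelPow K n x.1 j := by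
    intro n
    rw [← mul_one (∑' i, _), ← hπ_sum, ENNReal.tsum_mul_tsum]
    congr 1 with x
    ring
  have hπ_eq : ∀ n, π j = ∑' x, w x * kernelPow K n x.2 j := by
    intro n
    rw [← one_mul (π j), ← hν_sum, ← tsum_mul_kernelPow K hπ n j, ENNReal.tsum_mul_tsum]
    congr 1 with x
    ring
  refine ENNReal.tendsto_of_le_add_of_le_add
    (ne_top_of_le_ne_top one_ne_top (hπ_sum ▸ ENNReal.le_tsum j)) (fun n => ?_) (fun n => ?_)
    (ENNReal.tendsto_tsum_mul_of_tendsto_zero hw_fin hu_le hu)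
    (ENNReal.tendsto_tsum_mul_of_tendsto_zero hw_fin (fun n x => hu_le n x.swap) fun x => hu x.swap)
  · rw [hν_eq, hπ_eq n, ← ENNReal.tsum_add]
    refine ENNReal.tsum_le_tsum fun x => ?_
    rw [← mul_add]
    gcongr
    exact kernelPow_le_add_survivalProb hK rfl n x j
  · rw [hν_eq, hπ_eq n, ← ENNReal.tsum_add]
    refine ENNReal.tsum_le_tsum fun x => ?_
    rw [← mul_add]
    gcongr
    exact kernelPow_le_add_survivalProb hK rfl n x.swap j

end coupling

end MarkovChain

open MarkovChain in
theorem markov_convergence_to_invariant_general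
    {I : Type*}
    (P : I → I → ℝ)
    (hP_nonneg : ∀ i j, 0 ≤ P i j)
    (hP_row : ∀ i, ∑' j, P i j = 1)
    (Pp : ℕ → I → I → ℝ)
    (hPp_one : ∀ i j, Pp 1 i j = P i j)
    (hPp_succ : ∀ n i j, Pp (n + 1) i j = ∑' k, Pp n i k * P k j)
    (hirr : ∀ i j, ∃ n, 1 ≤ n ∧ 0 < Pp n i j)
    (haper : ∀ i, ∀ d : ℕ, (∀ n, 1 ≤ n → 0 < Pp n i i → d ∣ n) → d = 1)
    (π : I → ℝ)
    (hπ_nonneg : ∀ j, 0 ≤ π j)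
    (hπ_sum : ∑' j, π j = 1)
    (hπ_inv : ∀ j, ∑' i, π i * P i j = π j) :
    (∀ lam : I → ℝ, (∀ i, 0 ≤ lam i) → ∑' i, lam i = 1 →
      ∀ j, Filter.Tendsto (fun n => ∑' i, lam i * Pp n i j)
        Filter.atTop (nhds (π j))) ∧
    (∀ i j, Filter.Tendsto (fun n => Pp n i j) Filter.atTop (nhds (π j))) := by
  classical
  set K : I → I → ℝ≥0∞ := fun i j => ENNReal.ofReal (P i j)
  have hK : ∀ i, ∑' j, K i j = 1 := fun i => ENNReal.tsum_ofReal_eq_one (hP_nonneg i) (hP_row i)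
  have hK_le : ∀ i, ∑' j, K i j ≤ 1 := fun i => (hK i).le
  have hPp : ∀ n, 1 ≤ n → ∀ i j, Pp n i j = (kernelPow K n i j).toReal := fun n hn =>
    eq_toReal_kernelPow hK_le (by simp [K, hPp_one, hP_nonneg])
      (by simp [K, hPp_succ, hP_nonneg]) hn
  have hPp_pos : ∀ n, 1 ≤ n → ∀ i j, 0 < Pp n i j → 0 < kernelPow K n i j := fun n hn i j h =>
    (ENNReal.toReal_pos_iff.1 (hPp n hn i j ▸ h)).1
  have hirrK : IsIrreducible K := fun i j =>
    let ⟨n, hn, hpos⟩ := hirr i j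
    ⟨n, hPp_pos n hn i j hpos⟩
  have hapK : IsAperiodic K := fun i =>
    haper i _ fun n hn hpos => Nat.setGcd_dvd_of_mem (hPp_pos n hn i i hpos)
  set πK : I → ℝ≥0∞ := fun j => ENNReal.ofReal (π j)
  have hπK_sum : ∑' j, πK j = 1 := ENNReal.tsum_ofReal_eq_one hπ_nonneg hπ_sum
  have hπK : ∀ j, ∑' i, πK i * K i j = πK j := fun j => by
    have h_fin := ne_top_of_le_ne_top (hπK_sum ▸ one_ne_top) (tsum_mul_le_tsum K hK_le πK j)
    refine (ENNReal.toReal_eq_toReal_iff' h_fin ofReal_ne_top).1 ?_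
    rw [ENNReal.toReal_tsum_ofReal_mul hπ_nonneg fun i => ofReal_ne_top]
    simpa [K, πK, hP_nonneg, hπ_nonneg] using hπ_inv j
  have h_avg : ∀ lam : I → ℝ, (∀ i, 0 ≤ lam i) → ∑' i, lam i = 1 →
      ∀ j, Tendsto (fun n => ∑' i, lam i * Pp n i j) atTop (𝓝 (π j)) := by
    intro lam hlam hlam_sum j
    have h := (ENNReal.tendsto_toReal ofReal_ne_top).comp (tendsto_tsum_mul_kernelPow hK hirrK
      hapK hπK_sum hπK (ENNReal.tsum_ofReal_eq_one hlam hlam_sum) j)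
    rw [ENNReal.toReal_ofReal (hπ_nonneg j)] at h
    refine h.congr' (eventually_atTop.2 ⟨1, fun n hn => ?_⟩)
    simp [ENNReal.toReal_tsum_ofReal_mul hlam fun i => kernelPow_ne_top K hK_le n i j, hPp n hn]
  refine ⟨h_avg, fun i j => ?_⟩
  simpa using h_avg (fun k => if k = i then 1 else 0) (fun k => by split_ifs <;> norm_num)
    (by simp) j

/-- Convergence of an irreducible, aperiodic countable-state Markov chain
with an invariant probability distribution to that distribution.
The powers of the row-stochastic matrix `P` are encoded by the function `Pp`
via `Pp 1 = P` and `Pp (n+1) i j = ∑' k, Pp n i k * P k j`.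
Aperiodicity ("the gcd of {n ≥ 1 : Pp n i i > 0} is 1") is encoded as:
every common divisor of that set equals 1. -/
theorem markov_convergence_to_invariant
    {I : Type*} [Countable I]
    (P : I → I → ℝ)
    (hP_nonneg : ∀ i j, 0 ≤ P i j)
    (hP_row : ∀ i, ∑' j, P i j = 1)
    (Pp : ℕ → I → I → ℝ)
    (hPp_one : ∀ i j, Pp 1 i j = P i j)
    (hPp_succ : ∀ n i j, Pp (n + 1) i j = ∑' k, Pp n i k * P k j)
    (hirr : ∀ i j, ∃ n, 1 ≤ n ∧ 0 < Pp n i j)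
    (haper : ∀ i, ∀ d : ℕ, (∀ n, 1 ≤ n → 0 < Pp n i i → d ∣ n) → d = 1)
    (π : I → ℝ)
    (hπ_nonneg : ∀ j, 0 ≤ π j)
    (hπ_sum : ∑' j, π j = 1)
    (hπ_inv : ∀ j, ∑' i, π i * P i j = π j) :
    (∀ lam : I → ℝ, (∀ i, 0 ≤ lam i) → ∑' i, lam i = 1 →
      ∀ j, Filter.Tendsto (fun n => ∑' i, lam i * Pp n i j)
        Filter.atTop (nhds (π j))) ∧
    (∀ i j, Filter.Tendsto (fun n => Pp n i j) Filter.atTop (nhds (π j))) :=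
  markov_convergence_to_invariant_general P hP_nonneg hP_row Pp hPp_one hPp_succ hirr haper π
    hπ_nonneg hπ_sum hπ_inv
end

section
/- Let P be a row-stochastic matrix on a finite nonempty set I which is irreducible and aperiodic, with invariant probability distribution π. Then there exist an integer m ≥ 1 and a real number ρ ∈ (0,1) such that for every n ≥ 1 and all states i,j ∈ I, |(P^n)(i,j) − π_j| ≤ (1−ρ)^{(n/m)−1}, where the exponent (n/m)−1 is a real number and the power is the real power. -/
lemma mul_mem_of_addclosed {S : Set ℕ} (hadd : ∀ a ∈ S, ∀ b ∈ S, a + b ∈ S)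
    {s : ℕ} (hs : s ∈ S) : ∀ k, 1 ≤ k → k * s ∈ S := by
  intro k hk
  induction k with
  | zero => omega
  | succ n ih =>
    rcases Nat.eq_or_lt_of_le hk with h | h
    · simpa [← h] using hs
    · have hn : 1 ≤ n := by omega
      have := hadd _ (ih hn) _ hs
      simpa [Nat.succ_mul] using this

lemma numerical_semigroup_cofinite (S : Set ℕ)
    (hpos : ∀ n ∈ S, 1 ≤ n)
    (hadd : ∀ a ∈ S, ∀ b ∈ S, a + b ∈ S)
    (hgcd : ∀ d : ℕ, (∀ n ∈ S, d ∣ n) → d = 1) :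
    ∃ N : ℕ, ∀ n, N ≤ n → n ∈ S := by
  -- the set of differences is a subgroup of ℤ
  classical
  set S0 : Set ℕ := insert 0 S with hS0
  have hS0add : ∀ a ∈ S0, ∀ b ∈ S0, a + b ∈ S0 := by
    intro a ha b hb
    rcases ha with rfl | ha
    · simpa
    rcases hb with rfl | hb
    · simp [Set.mem_insert_iff]; right; exact ha
    · exact Set.mem_insert_of_mem _ (hadd a ha b hb)
  let H : AddSubgroup ℤ :=
  { carrier := {z : ℤ | ∃ p ∈ S0, ∃ q ∈ S0, z = (p : ℤ) - q}
    zero_mem' := ⟨0, Set.mem_insert _ _, 0, Set.mem_insert _ _, by simp⟩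
    add_mem' := by
      rintro x y ⟨p, hp, q, hq, rfl⟩ ⟨p', hp', q', hq', rfl⟩
      exact ⟨p + p', hS0add _ hp _ hp', q + q', hS0add _ hq _ hq', by push_cast; ring⟩
    neg_mem' := by
      rintro x ⟨p, hp, q, hq, rfl⟩
      exact ⟨q, hq, p, hp, by ring⟩ }
  obtain ⟨g, hg⟩ := Int.subgroup_cyclic H
  have hdvd : ∀ n ∈ S, g.natAbs ∣ n := by
    intro n hn
    have : (n : ℤ) ∈ H := ⟨n, Set.mem_insert_of_mem _ hn, 0, Set.mem_insert _ _, by simp⟩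
    rw [hg, AddSubgroup.mem_closure_singleton] at this
    obtain ⟨k, hk⟩ := this
    have : (g ∣ (n:ℤ)) := Dvd.intro_left k (by simpa [smul_eq_mul] using hk)
    have h2 := Int.natAbs_dvd_natAbs.2 this
    simpa using h2
  have hg1 : g.natAbs = 1 := hgcd _ hdvd
  -- 1 ∈ H
  have h1H : (1 : ℤ) ∈ H := by
    have hgH : g ∈ H := by rw [hg]; exact AddSubgroup.mem_closure_singleton.2 ⟨1, one_smul _ _⟩
    rcases Int.natAbs_eq g with h | h
    · rw [hg1] at h; push_cast at h; rw [← h]; exact hgH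
    · rw [hg1] at h; push_cast at h
      have hn := H.neg_mem hgH; rw [h] at hn; simpa using hn
  obtain ⟨p, hp, q, hq, hpq⟩ := h1H
  have hpq' : p = q + 1 := by omega
  rcases hq with hq0 | hqS
  · -- q = 0, so 1 ∈ S
    have : p = 1 := by omega
    subst this
    rcases hp with h | hp
    · omega
    refine ⟨1, fun n hn => ?_⟩
    simpa using mul_mem_of_addclosed hadd hp n hn
  · have hpS : p ∈ S := by
      rcases hp with h | h
      · exfalso; have := hpos q hqS; omega
      · exact h
    have hq1 : 1 ≤ q := hpos q hqS
    refine ⟨q * q, fun n hn => ?_⟩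
    set t := n / q with ht
    set r := n % q with hr
    have hrq : r < q := Nat.mod_lt _ (by omega)
    have htq : q ≤ t := Nat.le_div_iff_mul_le (by omega) |>.2 (by nlinarith)
    have hdecomp : n = (t - r) * q + r * p := by
      have h1 : n = q * t + r := (Nat.div_add_mod n q).symm
      rw [hpq']; 
      have : t - r + r = t := by omega
      nlinarith [Nat.sub_add_cancel (le_of_lt (lt_of_lt_of_le hrq htq))]
    rcases Nat.eq_zero_or_pos r with hr0 | hr1
    · rw [hdecomp, hr0]
      simpa using mul_mem_of_addclosed hadd hqS (t - 0) (by omega)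
    · rw [hdecomp]
      exact hadd _ (mul_mem_of_addclosed hadd hqS (t - r) (by omega)) _
        (mul_mem_of_addclosed hadd hpS r hr1)


lemma pow_entry_nonneg {I : Type*} [Fintype I] [DecidableEq I] (P : Matrix I I ℝ)
    (hP_nonneg : ∀ i j, 0 ≤ P i j) : ∀ n i j, 0 ≤ (P ^ n) i j := by
  intro n
  induction n with
  | zero => intro i j; by_cases h : i = j <;> simp [pow_zero, Matrix.one_apply, h]
  | succ n ih =>
    intro i j
    rw [pow_succ, Matrix.mul_apply]
    exact Finset.sum_nonneg fun k _ => mul_nonneg (ih i k) (hP_nonneg k j)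

lemma pow_entry_pos_mul {I : Type*} [Fintype I] [DecidableEq I] (P : Matrix I I ℝ)
    (hP_nonneg : ∀ i j, 0 ≤ P i j) {a b : ℕ} {i k j : I}
    (ha : 0 < (P ^ a) i k) (hb : 0 < (P ^ b) k j) : 0 < (P ^ (a + b)) i j := by
  rw [pow_add, Matrix.mul_apply]
  have h1 : (P ^ a) i k * (P ^ b) k j ≤ ∑ l, (P ^ a) i l * (P ^ b) l j :=
    Finset.single_le_sum (fun l _ => mul_nonneg (pow_entry_nonneg P hP_nonneg a i l)
      (pow_entry_nonneg P hP_nonneg b l j)) (Finset.mem_univ k)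
  exact lt_of_lt_of_le (mul_pos ha hb) h1

lemma pow_row_sum {I : Type*} [Fintype I] [DecidableEq I] (P : Matrix I I ℝ)
    (hP_row : ∀ i, ∑ j, P i j = 1) : ∀ n i, ∑ j, (P ^ n) i j = 1 := by
  intro n
  induction n with
  | zero => intro i; simp [Matrix.one_apply]
  | succ n ih =>
    intro i
    simp only [pow_succ, Matrix.mul_apply]
    rw [Finset.sum_comm]
    calc ∑ k, ∑ j, (P ^ n) i k * P k j = ∑ k, (P ^ n) i k * ∑ j, P k j := by
          simp [Finset.mul_sum]
      _ = 1 := by simp [hP_row, ih]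

lemma pow_entry_le_one {I : Type*} [Fintype I] [DecidableEq I] (P : Matrix I I ℝ)
    (hP_nonneg : ∀ i j, 0 ≤ P i j) (hP_row : ∀ i, ∑ j, P i j = 1) :
    ∀ n i j, (P ^ n) i j ≤ 1 := by
  intro n i j
  rw [← pow_row_sum P hP_row n i]
  exact Finset.single_le_sum (fun k _ => pow_entry_nonneg P hP_nonneg n i k) (Finset.mem_univ j)

lemma exists_pow_pos {I : Type*} [Fintype I] [DecidableEq I] [Nonempty I] (P : Matrix I I ℝ)
    (hP_nonneg : ∀ i j, 0 ≤ P i j)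
    (hirr : ∀ i j, ∃ n, 1 ≤ n ∧ 0 < (P ^ n) i j)
    (haper : ∀ i, ∀ d : ℕ, (∀ n, 1 ≤ n → 0 < (P ^ n) i i → d ∣ n) → d = 1) :
    ∃ m : ℕ, 1 ≤ m ∧ ∀ i j, 0 < (P ^ m) i j := by
  classical
  have hN : ∀ i : I, ∃ N : ℕ, ∀ n, N ≤ n → (1 ≤ n ∧ 0 < (P ^ n) i i) := by
    intro i
    have := numerical_semigroup_cofinite {n : ℕ | 1 ≤ n ∧ 0 < (P ^ n) i i}
      (fun n hn => hn.1)
      (fun a ha b hb => ⟨by have := ha.1; have := hb.1; omega, pow_entry_pos_mul P hP_nonneg ha.2 hb.2⟩)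
      (fun d hd => haper i d (fun n h1 h2 => hd n ⟨h1, h2⟩))
    obtain ⟨N, hN⟩ := this
    exact ⟨N, fun n hn => hN n hn⟩
  choose N hNspec using hN
  choose c hc1 hc2 using fun p : I × I => hirr p.1 p.2
  set m := (Finset.univ.sup fun p : I × I => N p.1 + c p) + 1 with hm
  refine ⟨m, by omega, fun i j => ?_⟩
  have hle : N i + c (i, j) ≤ m := by
    have h : N i + c (i, j) ≤ Finset.univ.sup fun p : I × I => N p.1 + c p :=
      by
        have h := Finset.le_sup (f := fun p : I × I => N p.1 + c p) (Finset.mem_univ (i, j))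
        simpa using h
    omega
  have hdecomp : m = (m - c (i, j)) + c (i, j) := by
    have := hc1 (i, j); omega
  rw [hdecomp]
  exact pow_entry_pos_mul P hP_nonneg
    (hNspec i (m - c (i, j)) (by omega)).2 (hc2 (i, j))
/-- Geometric rate of convergence for a finite irreducible aperiodic
Markov chain with invariant distribution `π`:
there exist `m ≥ 1` and `ρ ∈ (0,1)` with `|(P^n) i j − π j| ≤ (1−ρ)^{(n/m)−1}`
(real exponent, real power). Aperiodicity ("gcd of {n ≥ 1 : (P^n) i i > 0} is 1")
is encoded as: every common divisor of that set equals 1. -/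
theorem finite_markov_convergence_rate
    {I : Type*} [Fintype I] [Nonempty I] [DecidableEq I]
    (P : Matrix I I ℝ)
    (hP_nonneg : ∀ i j, 0 ≤ P i j)
    (hP_row : ∀ i, ∑ j, P i j = 1)
    (hirr : ∀ i j, ∃ n, 1 ≤ n ∧ 0 < (P ^ n) i j)
    (haper : ∀ i, ∀ d : ℕ, (∀ n, 1 ≤ n → 0 < (P ^ n) i i → d ∣ n) → d = 1)
    (π : I → ℝ)
    (hπ_nonneg : ∀ j, 0 ≤ π j)
    (hπ_sum : ∑ j, π j = 1)
    (hπ_inv : ∀ j, ∑ i, π i * P i j = π j) :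
    ∃ m : ℕ, 1 ≤ m ∧ ∃ ρ : ℝ, ρ ∈ Set.Ioo (0 : ℝ) 1 ∧
      ∀ n : ℕ, 1 ≤ n → ∀ i j,
        |(P ^ n) i j - π j| ≤ (1 - ρ) ^ ((n : ℝ) / (m : ℝ) - 1) := by
  classical
  obtain ⟨m, hm1, hmpos⟩ := exists_pow_pos P hP_nonneg hirr haper
  have hne : (Finset.univ : Finset (I × I)).Nonempty := Finset.univ_nonempty
  set δ := Finset.univ.inf' hne (fun p : I × I => (P ^ m) p.1 p.2) with hδ
  have hδpos : 0 < δ := (Finset.lt_inf'_iff hne).2 (fun p _ => hmpos p.1 p.2)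
  have hδle : ∀ i j, δ ≤ (P ^ m) i j := fun i j =>
    Finset.inf'_le _ (Finset.mem_univ (i, j))
  set ρ := min δ (1/2 : ℝ) with hρ
  have hρpos : 0 < ρ := lt_min hδpos (by norm_num)
  have hρhalf : ρ ≤ 1/2 := min_le_right _ _
  have hρle : ∀ i j, ρ ≤ (P ^ m) i j := fun i j => le_trans (min_le_left _ _) (hδle i j)
  refine ⟨m, hm1, ρ, ⟨hρpos, by linarith⟩, ?_⟩
  have hneI : (Finset.univ : Finset I).Nonempty := Finset.univ_nonempty
  set M : ℕ → I → ℝ := fun n j => Finset.univ.sup' hneI (fun i => (P ^ n) i j) with hMdef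
  set L : ℕ → I → ℝ := fun n j => Finset.univ.inf' hneI (fun i => (P ^ n) i j) with hLdef
  have hMle : ∀ n i j, (P ^ n) i j ≤ M n j := fun n i j => by
    exact Finset.le_sup' (fun i => (P ^ n) i j) (Finset.mem_univ i)
  have hLle : ∀ n i j, L n j ≤ (P ^ n) i j := fun n i j => by
    exact Finset.inf'_le (fun i => (P ^ n) i j) (Finset.mem_univ i)
  -- monotonicity
  have hMmono : ∀ s n j, M (s + n) j ≤ M n j := by
    intro s n j
    apply Finset.sup'_le
    intro i _
    rw [pow_add, Matrix.mul_apply]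
    calc ∑ k, (P ^ s) i k * (P ^ n) k j ≤ ∑ k, (P ^ s) i k * M n j :=
          Finset.sum_le_sum (fun k _ => mul_le_mul_of_nonneg_left (hMle n k j)
            (pow_entry_nonneg P hP_nonneg s i k))
      _ = M n j := by rw [← Finset.sum_mul, pow_row_sum P hP_row s i, one_mul]
  have hLmono : ∀ s n j, L n j ≤ L (s + n) j := by
    intro s n j
    apply Finset.le_inf'
    intro i _
    rw [pow_add, Matrix.mul_apply]
    calc L n j = ∑ k, (P ^ s) i k * L n j := by
          rw [← Finset.sum_mul, pow_row_sum P hP_row s i, one_mul]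
      _ ≤ ∑ k, (P ^ s) i k * (P ^ n) k j :=
          Finset.sum_le_sum (fun k _ => mul_le_mul_of_nonneg_left (hLle n k j)
            (pow_entry_nonneg P hP_nonneg s i k))
  -- contraction
  have hcontr : ∀ n j, M (m + n) j ≤ ρ * L n j + (1 - ρ) * M n j := by
    intro n j
    obtain ⟨k0, -, hk0⟩ := Finset.exists_mem_eq_inf' hneI (fun i => (P ^ n) i j)
    apply Finset.sup'_le
    intro i _
    rw [pow_add, Matrix.mul_apply]
    have hsplit : ∑ k, (P ^ m) i k * (P ^ n) k j
        = (∑ k, ((P ^ m) i k - if k = k0 then ρ else 0) * (P ^ n) k j)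
          + ρ * (P ^ n) k0 j := by
      have hterm : ∀ k : I, ((P ^ m) i k - if k = k0 then ρ else 0) * (P ^ n) k j
          = (P ^ m) i k * (P ^ n) k j - (if k = k0 then ρ * (P ^ n) k j else 0) := by
        intro k; split <;> ring
      rw [Finset.sum_congr rfl (fun k _ => hterm k), Finset.sum_sub_distrib,
        Finset.sum_ite_eq' Finset.univ k0]
      simp
    rw [hsplit]
    have hcoeffsum : ∑ k, ((P ^ m) i k - if k = k0 then ρ else 0) = 1 - ρ := by
      rw [Finset.sum_sub_distrib, pow_row_sum P hP_row m i,
        Finset.sum_ite_eq' Finset.univ k0]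
      simp
    have hbound : ∑ k, ((P ^ m) i k - if k = k0 then ρ else 0) * (P ^ n) k j
        ≤ (1 - ρ) * M n j := by
      rw [← hcoeffsum, Finset.sum_mul]
      apply Finset.sum_le_sum
      intro k _
      apply mul_le_mul_of_nonneg_left (hMle n k j)
      by_cases hk : k = k0
      · subst hk; rw [if_pos rfl]; linarith [hρle i k]
      · simp only [if_neg hk]; simpa using pow_entry_nonneg P hP_nonneg m i k
    have : ρ * (P ^ n) k0 j = ρ * L n j := by rw [← hk0]
    linarith
  -- π between L and M
  have hπpow : ∀ n j, ∑ i, π i * (P ^ n) i j = π j := by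
    intro n
    induction n with
    | zero =>
      intro j
      simp [Matrix.one_apply]
    | succ n ih =>
      intro j
      simp only [pow_succ, Matrix.mul_apply, Finset.mul_sum]
      rw [Finset.sum_comm]
      calc ∑ k, ∑ i, π i * ((P ^ n) i k * P k j)
          = ∑ k, (∑ i, π i * (P ^ n) i k) * P k j := by
            congr 1; ext k; rw [Finset.sum_mul]; congr 1; ext i; ring
        _ = ∑ k, π k * P k j := by simp [ih]
        _ = π j := hπ_inv j
  have hπM : ∀ n j, π j ≤ M n j := by
    intro n j
    calc π j = ∑ i, π i * (P ^ n) i j := (hπpow n j).symm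
      _ ≤ ∑ i, π i * M n j :=
          Finset.sum_le_sum (fun i _ => mul_le_mul_of_nonneg_left (hMle n i j) (hπ_nonneg i))
      _ = M n j := by rw [← Finset.sum_mul, hπ_sum, one_mul]
  have hπL : ∀ n j, L n j ≤ π j := by
    intro n j
    calc L n j = ∑ i, π i * L n j := by rw [← Finset.sum_mul, hπ_sum, one_mul]
      _ ≤ ∑ i, π i * (P ^ n) i j :=
          Finset.sum_le_sum (fun i _ => mul_le_mul_of_nonneg_left (hLle n i j) (hπ_nonneg i))
      _ = π j := hπpow n j
  -- geometric decay along multiples of m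
  have hgeo : ∀ k j, M (k * m) j - L (k * m) j ≤ (1 - ρ) ^ k := by
    intro k
    induction k with
    | zero =>
      intro j
      obtain ⟨i1, -, hi1⟩ := Finset.exists_mem_eq_sup' hneI (fun i => (P ^ 0) i j)
      obtain ⟨i2, -, hi2⟩ := Finset.exists_mem_eq_inf' hneI (fun i => (P ^ 0) i j)
      have h1 : M 0 j ≤ 1 := by
        rw [hMdef]; simp only []; rw [hi1]
        exact pow_entry_le_one P hP_nonneg hP_row 0 i1 j
      have h2 : 0 ≤ L 0 j := by
        rw [hLdef]; simp only []; rw [hi2]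
        exact pow_entry_nonneg P hP_nonneg 0 i2 j
      simpa using by linarith
    | succ k ih =>
      intro j
      have hmul : (k + 1) * m = m + k * m := by ring
      have h1 := hcontr (k * m) j
      have h2 := hLmono m (k * m) j
      have h3 := ih j
      have h4 : L (k * m) j ≤ M (k * m) j := le_trans (hπL _ _) (hπM _ _)
      rw [hmul, pow_succ]
      have hρ1 : (0:ℝ) ≤ 1 - ρ := by linarith
      calc M (m + k * m) j - L (m + k * m) j
          ≤ ρ * L (k * m) j + (1 - ρ) * M (k * m) j - L (k * m) j := by linarith
        _ = (1 - ρ) * (M (k * m) j - L (k * m) j) := by ring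
        _ ≤ (1 - ρ) * (1 - ρ) ^ k := by
            exact mul_le_mul_of_nonneg_left h3 hρ1
        _ = (1 - ρ) ^ k * (1 - ρ) := by ring
  -- conclusion
  intro n hn i j
  set k := n / m with hk
  have hkm : k * m ≤ n := Nat.div_mul_le_self n m
  have hdecomp : n = (n - k * m) + k * m := by omega
  have hMn : M n j ≤ M (k * m) j := by
    rw [hdecomp]; exact hMmono _ _ j
  have hLn : L (k * m) j ≤ L n j := by
    conv_rhs => rw [hdecomp]
    exact hLmono _ _ j
  have habs : |(P ^ n) i j - π j| ≤ M n j - L n j := by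
    rw [abs_le]
    have := hMle n i j
    have := hLle n i j
    have := hπM n j
    have := hπL n j
    constructor <;> linarith
  have hstep : M n j - L n j ≤ (1 - ρ) ^ k := by
    have := hgeo k j
    linarith
  have hρ1 : (0:ℝ) < 1 - ρ := by linarith
  have hcast : ((1:ℝ) - ρ) ^ k = (1 - ρ) ^ ((k : ℕ) : ℝ) := (Real.rpow_natCast _ k).symm
  have hexp : (n : ℝ) / (m : ℝ) - 1 ≤ (k : ℝ) := by
    have hmpos' : (0:ℝ) < m := by exact_mod_cast hm1
    rw [sub_le_iff_le_add, div_le_iff₀ hmpos']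
    have h1 : (m * (n / m) + n % m : ℕ) = n := Nat.div_add_mod n m
    have h2 : n % m < m := Nat.mod_lt _ (by omega)
    have hc1 : (m : ℝ) * (k : ℝ) + ((n % m : ℕ) : ℝ) = (n : ℝ) := by
      rw [hk]; exact_mod_cast h1
    have hc2 : ((n % m : ℕ) : ℝ) < (m : ℝ) := by exact_mod_cast h2
    nlinarith
  calc |(P ^ n) i j - π j| ≤ (1 - ρ) ^ k := le_trans habs hstep
    _ = (1 - ρ) ^ ((k : ℕ) : ℝ) := hcast
    _ ≤ (1 - ρ) ^ ((n : ℝ) / (m : ℝ) - 1) :=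
        Real.rpow_le_rpow_of_exponent_ge hρ1 (by linarith) hexp
end

section
/- For an integer N ≥ 3, let P be the cyclic random-walk transition matrix on ℤ/Nℤ. Then P is irreducible and aperiodic, and for every n ≥ 1 and all states i,j, |(P^n)(i,j) − 1/N| ≤ ((3^{N−1} − 1)/3^{N−1})^{(n/(N−1))−1}, where the exponent is a real number and the power is the real power. -/
/-- The cyclic random-walk transition matrix on `ℤ/Nℤ`:
`P i j = 1/3` if `j ∈ {i−1, i, i+1}` and `0` otherwise. -/
noncomputable def cyclicRW (N : ℕ) : Matrix (ZMod N) (ZMod N) ℝ :=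
  fun i j => if j = i - 1 ∨ j = i ∨ j = i + 1 then 1 / 3 else 0

set_option linter.unusedSectionVars false

section aux
variable {N : ℕ} [NeZero N]

lemma crw_nonneg (i j : ZMod N) : 0 ≤ cyclicRW N i j := by
  unfold cyclicRW; split <;> norm_num

lemma crw_one_ne (hN : 3 ≤ N) : (1 : ZMod N) ≠ 0 := by
  have : ¬ (N ∣ 1) := Nat.not_dvd_of_pos_of_lt (by norm_num) (by omega)
  exact fun h => this ((ZMod.natCast_eq_zero_iff 1 N).mp (by exact_mod_cast h))

lemma crw_two_ne (hN : 3 ≤ N) : (2 : ZMod N) ≠ 0 := by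
  have : ¬ (N ∣ 2) := Nat.not_dvd_of_pos_of_lt (by norm_num) (by omega)
  exact fun h => this ((ZMod.natCast_eq_zero_iff 2 N).mp (by exact_mod_cast h))

lemma crw_split (hN : 3 ≤ N) (i j : ZMod N) : cyclicRW N i j =
    (if j = i - 1 then (1:ℝ)/3 else 0) + (if j = i then (1:ℝ)/3 else 0)
      + (if j = i + 1 then (1:ℝ)/3 else 0) := by
  have h1 := crw_one_ne hN
  have h2 := crw_two_ne hN
  have d1 : i - 1 ≠ i := fun h => h1 (sub_eq_self.mp h)
  have d2 : i - 1 ≠ i + 1 := fun h => h2 (by linear_combination -h)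
  have d3 : (i : ZMod N) ≠ i + 1 := fun h => h1 (by linear_combination -h)
  unfold cyclicRW
  by_cases ha : j = i - 1 <;> by_cases hb : j = i <;> by_cases hc : j = i + 1
  · exact absurd (ha.symm.trans hb) d1
  · exact absurd (ha.symm.trans hb) d1
  · exact absurd (ha.symm.trans hc) d2
  · rw [if_pos (Or.inl ha), if_pos ha, if_neg hb, if_neg hc]; ring
  · exact absurd (hb.symm.trans hc) d3
  · rw [if_pos (Or.inr (Or.inl hb)), if_neg ha, if_pos hb, if_neg hc]; ring
  · rw [if_pos (Or.inr (Or.inr hc)), if_neg ha, if_neg hb, if_pos hc]; ring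
  · rw [if_neg (by tauto), if_neg ha, if_neg hb, if_neg hc]; ring

lemma crw_rowsum (hN : 3 ≤ N) (i : ZMod N) : ∑ j, cyclicRW N i j = 1 := by
  simp only [crw_split hN i]
  rw [Finset.sum_add_distrib, Finset.sum_add_distrib]
  simp [Finset.sum_ite_eq']
  norm_num

lemma crw_symm (i j : ZMod N) : cyclicRW N i j = cyclicRW N j i := by
  unfold cyclicRW
  refine if_congr ?_ rfl rfl
  constructor <;> rintro (h | h | h)
  · right; right; rw [h]; ring
  · right; left; exact h.symm
  · left; rw [h]; ring
  · right; right; rw [h]; ring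
  · right; left; exact h.symm
  · left; rw [h]; ring

section auxpow
variable {N : ℕ} [NeZero N]

lemma crw_pow_nonneg (n : ℕ) (i j : ZMod N) : 0 ≤ (cyclicRW N ^ n) i j := by
  induction n generalizing i j with
  | zero => simp [Matrix.one_apply]; positivity
  | succ n ih =>
      rw [pow_succ, Matrix.mul_apply]
      exact Finset.sum_nonneg fun k _ => mul_nonneg (ih i k) (crw_nonneg k j)

lemma crw_pow_rowsum (hN : 3 ≤ N) (n : ℕ) (i : ZMod N) :
    ∑ j, (cyclicRW N ^ n) i j = 1 := by
  induction n with
  | zero => simp [Matrix.one_apply]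
  | succ n ih =>
      simp only [pow_succ, Matrix.mul_apply]
      rw [Finset.sum_comm]
      calc ∑ k, ∑ j, (cyclicRW N ^ n) i k * cyclicRW N k j
          = ∑ k, (cyclicRW N ^ n) i k * ∑ j, cyclicRW N k j := by
            simp [Finset.mul_sum]
        _ = 1 := by simp only [crw_rowsum hN, mul_one]; exact ih

lemma crw_pow_symm (n : ℕ) (i j : ZMod N) :
    (cyclicRW N ^ n) i j = (cyclicRW N ^ n) j i := by
  have hT : Matrix.transpose (cyclicRW N) = cyclicRW N := by
    ext a b; exact (crw_symm b a)
  have h2 : Matrix.transpose ((cyclicRW N) ^ n) = (cyclicRW N) ^ n := by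
    rw [Matrix.transpose_pow, hT]
  conv_lhs => rw [← h2]
  rfl

lemma crw_pow_colsum (hN : 3 ≤ N) (n : ℕ) (j : ZMod N) :
    ∑ i, (cyclicRW N ^ n) i j = 1 := by
  simp only [fun i => crw_pow_symm n i j]
  exact crw_pow_rowsum hN n j

lemma crw_pow_le_one (hN : 3 ≤ N) (n : ℕ) (i j : ZMod N) :
    (cyclicRW N ^ n) i j ≤ 1 := by
  calc (cyclicRW N ^ n) i j ≤ ∑ j', (cyclicRW N ^ n) i j' :=
        Finset.single_le_sum (fun k _ => crw_pow_nonneg n i k) (Finset.mem_univ j)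
    _ = 1 := crw_pow_rowsum hN n i

lemma crw_pow_ge (n : ℕ) : ∀ d : ℕ, d ≤ n → ∀ i : ZMod N,
    ((1:ℝ)/3)^n ≤ (cyclicRW N ^ n) i (i + (d : ZMod N)) := by
  induction n with
  | zero =>
      intro d hd i
      interval_cases d
      simp [Matrix.one_apply]
  | succ n ih =>
      intro d hd i
      have key : ∀ k : ZMod N, (cyclicRW N ^ n) i k * cyclicRW N k (i + (d : ZMod N))
          ≤ (cyclicRW N ^ (n+1)) i (i + (d : ZMod N)) := by
        intro k
        rw [pow_succ, Matrix.mul_apply]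
        exact Finset.single_le_sum
          (fun k' _ => mul_nonneg (crw_pow_nonneg n i k') (crw_nonneg k' _)) (Finset.mem_univ k)
      rcases Nat.eq_zero_or_eq_succ_pred d with h0 | hs
      · subst h0
        refine le_trans ?_ (key i)
        have hPii : cyclicRW N i (i + ((0:ℕ) : ZMod N)) = 1/3 := by
          simp [cyclicRW]
        rw [hPii, pow_succ]
        have := ih 0 (Nat.zero_le n) i
        simp only [Nat.cast_zero, add_zero] at this ⊢
        nlinarith [this]
      · set d' := d - 1 with hd'
        have hdd : d = d' + 1 := hs
        refine le_trans ?_ (key (i + (d' : ZMod N)))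
        have hstep : cyclicRW N (i + (d' : ZMod N)) (i + (d : ZMod N)) = 1/3 := by
          have : i + (d : ZMod N) = (i + (d' : ZMod N)) + 1 := by
            rw [hdd]; push_cast; ring
          rw [this]
          simp [cyclicRW]
        rw [hstep, pow_succ]
        have := ih d' (by omega) i
        nlinarith [this]

lemma crw_minor (hN : 3 ≤ N) (i j : ZMod N) :
    ((1:ℝ)/3)^(N-1) ≤ (cyclicRW N ^ (N-1)) i j := by
  have hd : (j - i).val ≤ N - 1 := by
    have := ZMod.val_lt (j - i)
    omega
  have := crw_pow_ge (N-1) (j - i).val hd i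
  rwa [show i + (((j - i).val : ℕ) : ZMod N) = j by
    rw [ZMod.natCast_zmod_val]; ring] at this

end auxpow

section contraction
variable {N : ℕ} [NeZero N]

lemma crw_contraction_step (Q : Matrix (ZMod N) (ZMod N) ℝ) (δ : ℝ) (hδ : 0 ≤ δ)
    (hmin : ∀ i k, δ ≤ Q i k) (hrow : ∀ i, ∑ k, Q i k = 1)
    (v : ZMod N → ℝ) (M ml : ℝ) (hM : ∀ k, v k ≤ M) (hml : ∀ k, ml ≤ v k) (i : ZMod N) :
    δ * v 0 + (1 - δ) * ml ≤ ∑ k, Q i k * v k ∧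
      ∑ k, Q i k * v k ≤ δ * v 0 + (1 - δ) * M := by
  set w : ZMod N → ℝ := fun k => Q i k - if k = 0 then δ else 0 with hw
  have hw0 : ∀ k, 0 ≤ w k := by
    intro k
    simp only [hw]
    split_ifs
    · linarith [hmin i k]
    · linarith [hmin i k]
  have hsumw : ∑ k, w k = 1 - δ := by
    simp only [hw]
    rw [Finset.sum_sub_distrib, hrow i, Finset.sum_ite_eq' Finset.univ (0 : ZMod N)]
    simp
  have hdecomp : ∑ k, Q i k * v k = (∑ k, w k * v k) + δ * v 0 := by
    have : ∀ k : ZMod N, Q i k * v k = w k * v k + (if k = 0 then δ * v k else 0) := by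
      intro k
      simp only [hw]
      split_ifs <;> ring
    rw [Finset.sum_congr rfl (fun k _ => this k), Finset.sum_add_distrib,
      Finset.sum_ite_eq' Finset.univ (0 : ZMod N)]
    simp
  constructor
  · rw [hdecomp]
    have : (1 - δ) * ml = ∑ k, w k * ml := by
      rw [← Finset.sum_mul, hsumw]
    rw [this]
    have hle : ∑ k, w k * ml ≤ ∑ k, w k * v k :=
      Finset.sum_le_sum fun k _ => mul_le_mul_of_nonneg_left (hml k) (hw0 k)
    linarith
  · rw [hdecomp]
    have : (1 - δ) * M = ∑ k, w k * M := by
      rw [← Finset.sum_mul, hsumw]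
    rw [this]
    have hle : ∑ k, w k * v k ≤ ∑ k, w k * M :=
      Finset.sum_le_sum fun k _ => mul_le_mul_of_nonneg_left (hM k) (hw0 k)
    linarith
end contraction


/-- For `N ≥ 3`, the cyclic random walk on `ℤ/Nℤ` is irreducible and
aperiodic, and `|(P^n) i j − 1/N| ≤ ((3^{N−1} − 1)/3^{N−1})^{(n/(N−1))−1}`
(real exponent, real power) for all `n ≥ 1` and all states `i, j`.
Aperiodicity ("gcd of {n ≥ 1 : (P^n) i i > 0} is 1") is encoded as:
every common divisor of that set equals 1. -/
theorem cyclicRW_convergence_rate (N : ℕ) [NeZero N] (hN : 3 ≤ N) :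
    (∀ i j : ZMod N, ∃ n, 1 ≤ n ∧ 0 < (cyclicRW N ^ n) i j) ∧
    (∀ i : ZMod N, ∀ d : ℕ, (∀ n, 1 ≤ n → 0 < (cyclicRW N ^ n) i i → d ∣ n) → d = 1) ∧
    (∀ n : ℕ, 1 ≤ n → ∀ i j : ZMod N,
      |(cyclicRW N ^ n) i j - 1 / (N : ℝ)| ≤
        (((3 : ℝ) ^ (N - 1) - 1) / (3 : ℝ) ^ (N - 1)) ^ ((n : ℝ) / ((N : ℝ) - 1) - 1)) := by
  set m := N - 1 with hmdef
  have hm1 : 1 ≤ m := by omega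
  set δ : ℝ := (1/3 : ℝ)^m with hδdef
  have hδpos : 0 < δ := by positivity
  have hδlt : δ < 1 := pow_lt_one₀ (by norm_num) (by norm_num) (by omega)
  set θ : ℝ := 1 - δ with hθdef
  have hθpos : 0 < θ := by simp only [hθdef]; linarith
  have hθle : θ ≤ 1 := by simp only [hθdef]; linarith
  refine ⟨?_, ?_, ?_⟩
  · intro i j
    exact ⟨m, hm1, lt_of_lt_of_le (by positivity) (crw_minor hN i j)⟩
  · intro i d hd
    have h1 : 0 < (cyclicRW N ^ 1) i i := by
      rw [pow_one]
      unfold cyclicRW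
      rw [if_pos (Or.inr (Or.inl rfl))]
      norm_num
    exact Nat.dvd_one.mp (hd 1 le_rfl h1)
  · intro n hn i j
    have hNpos : (0:ℝ) < (N:ℝ) := by positivity
    set v : ℕ → ZMod N → ℝ := fun t k => (cyclicRW N ^ t) k j with hv
    have hne : (Finset.univ : Finset (ZMod N)).Nonempty := Finset.univ_nonempty
    set Mx : ℕ → ℝ := fun t => Finset.univ.sup' hne (v t) with hMx
    set mn : ℕ → ℝ := fun t => Finset.univ.inf' hne (v t) with hmn
    have hlow : ∀ t k, mn t ≤ v t k := fun t k => Finset.inf'_le _ (Finset.mem_univ k)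
    have hup : ∀ t k, v t k ≤ Mx t := fun t k => Finset.le_sup' _ (Finset.mem_univ k)
    have hMx1 : ∀ t, Mx t ≤ 1 := fun t =>
      Finset.sup'_le _ _ fun k _ => crw_pow_le_one hN t k j
    have hmn0 : ∀ t, 0 ≤ mn t := fun t =>
      Finset.le_inf' _ _ fun k _ => crw_pow_nonneg t k j
    -- sandwich: mn t ≤ 1/N ≤ Mx t
    have hsand : ∀ t, mn t ≤ 1 / (N:ℝ) ∧ 1 / (N:ℝ) ≤ Mx t := by
      intro t
      have hsum : ∑ k, v t k = 1 := crw_pow_colsum hN t j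
      have hcard : ∑ _k : ZMod N, (1:ℝ) = (N:ℝ) := by
        simp [Finset.card_univ, ZMod.card]
      constructor
      · have h1 : (N:ℝ) * mn t ≤ 1 := by
          rw [← hsum]
          calc (N:ℝ) * mn t = ∑ _k : ZMod N, mn t := by
                simp [Finset.card_univ, ZMod.card, mul_comm]
            _ ≤ ∑ k, v t k := Finset.sum_le_sum fun k _ => hlow t k
        rw [le_div_iff₀ hNpos]
        linarith
      · have h1 : (1:ℝ) ≤ (N:ℝ) * Mx t := by
          rw [← hsum]
          calc ∑ k, v t k ≤ ∑ _k : ZMod N, Mx t := Finset.sum_le_sum fun k _ => hup t k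
            _ = (N:ℝ) * Mx t := by simp [Finset.card_univ, ZMod.card, mul_comm]
        rw [div_le_iff₀ hNpos]
        linarith
    -- one-block contraction
    have hcontr : ∀ t, Mx (t + m) - mn (t + m) ≤ θ * (Mx t - mn t) := by
      intro t
      have hQmin : ∀ a b : ZMod N, δ ≤ (cyclicRW N ^ m) a b := fun a b => crw_minor hN a b
      have hQrow : ∀ a : ZMod N, ∑ b, (cyclicRW N ^ m) a b = 1 := crw_pow_rowsum hN m
      have hrep : ∀ a : ZMod N, v (t + m) a = ∑ k, (cyclicRW N ^ m) a k * v t k := by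
        intro a
        simp only [hv]
        rw [show t + m = m + t by omega, pow_add, Matrix.mul_apply]
      have hboth := fun a : ZMod N =>
        crw_contraction_step (cyclicRW N ^ m) δ hδpos.le hQmin hQrow (v t) (Mx t) (mn t)
          (hup t) (hlow t) a
      have hMk : Mx (t + m) ≤ δ * v t 0 + (1 - δ) * Mx t := by
        apply Finset.sup'_le
        intro a _
        rw [show v (t+m) a = _ from hrep a] at *
        exact (hboth a).2
      have hmk : δ * v t 0 + (1 - δ) * mn t ≤ mn (t + m) := by
        apply Finset.le_inf'
        intro a _
        rw [show v (t+m) a = _ from hrep a]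
        exact (hboth a).1
      simp only [hθdef]
      linarith
    -- iterate
    have hiter : ∀ q r : ℕ, Mx (r + q * m) - mn (r + q * m) ≤ θ^q * (Mx r - mn r) := by
      intro q
      induction q with
      | zero => intro r; simp
      | succ q ih =>
          intro r
          have h1 : r + (q+1) * m = (r + q * m) + m := by ring
          rw [h1]
          calc Mx ((r + q*m) + m) - mn ((r + q*m) + m) ≤ θ * (Mx (r + q*m) - mn (r + q*m)) :=
                hcontr (r + q*m)
            _ ≤ θ * (θ^q * (Mx r - mn r)) := mul_le_mul_of_nonneg_left (ih r) hθpos.le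
            _ = θ^(q+1) * (Mx r - mn r) := by ring
    set q := n / m with hq
    set r := n % m with hr
    have hnrq : n = r + q * m := by
      rw [hq, hr]
      exact (Nat.mod_add_div' n m).symm
    have hosc1 : Mx r - mn r ≤ 1 := by linarith [hMx1 r, hmn0 r]
    have hoscn : Mx n - mn n ≤ θ^q := by
      rw [hnrq]
      calc Mx (r + q*m) - mn (r + q*m) ≤ θ^q * (Mx r - mn r) := hiter q r
        _ ≤ θ^q * 1 := mul_le_mul_of_nonneg_left hosc1 (by positivity)
        _ = θ^q := mul_one _
    have habs : |(cyclicRW N ^ n) i j - 1 / (N:ℝ)| ≤ θ^q := by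
      rw [abs_le]
      have h1 := hlow n i
      have h2 := hup n i
      have h3 := hsand n
      simp only [hv] at h1 h2
      constructor
      · linarith [h3.2]
      · linarith [h3.1]
    -- convert to rpow bound
    have hbase : (((3:ℝ)^m - 1) / (3:ℝ)^m) = θ := by
      have h3 : ((3:ℝ)^m) ≠ 0 := by positivity
      simp only [hθdef, hδdef, div_pow, one_pow]
      field_simp
    have hmR : (0:ℝ) < (m:ℝ) := by exact_mod_cast Nat.lt_of_lt_of_le Nat.zero_lt_one hm1
    have hcastm : (N:ℝ) - 1 = (m:ℝ) := by
      simp only [hmdef]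
      push_cast [Nat.cast_sub (by omega : 1 ≤ N)]
      ring
    have hexp : (n:ℝ) / (m:ℝ) - 1 ≤ (q:ℝ) := by
      rw [sub_le_iff_le_add, div_le_iff₀ hmR]
      have hnle : n ≤ (q + 1) * m := by
        have h1 : r < m := Nat.mod_lt n (by omega)
        have hx : (q + 1) * m = q * m + m := by ring
        omega
      calc (n:ℝ) ≤ ((q+1) * m : ℕ) := by exact_mod_cast hnle
        _ = ((q:ℝ) + 1) * m := by push_cast; ring
    calc |(cyclicRW N ^ n) i j - 1 / (N:ℝ)| ≤ θ^q := habs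
      _ = θ ^ ((q:ℕ):ℝ) := (Real.rpow_natCast θ q).symm
      _ ≤ θ ^ ((n:ℝ) / ((N:ℝ) - 1) - 1) := by
          rw [hcastm]
          exact Real.rpow_le_rpow_of_exponent_ge hθpos hθle hexp
      _ = (((3:ℝ)^m - 1) / (3:ℝ)^m) ^ ((n:ℝ) / ((N:ℝ) - 1) - 1) := by rw [hbase]
end aux
end

section
/- For an odd integer N ≥ 3, let P be the cyclic random-walk transition matrix on ℤ/Nℤ. Then for every n ≥ 1 and all states i,j, |(P^n)(i,j) − 1/N| ≤ ((3^{(N−1)/2} − 1)/3^{(N−1)/2})^{(2n/(N−1))−1}, where the exponent is a real number and the power is the real power. -/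
open Finset Matrix

lemma Matrix.mul_le_mulVec_apply_sub {ι : Type*} [Fintype ι] [DecidableEq ι]
    {Q : Matrix ι ι ℝ} (hQ : Q ∈ rowStochastic ℝ ι) {v : ι → ℝ} {a : ℝ} (hv : ∀ k, a ≤ v k)
    (i k₀ : ι) : Q i k₀ * (v k₀ - a) ≤ (Q *ᵥ v) i - a := by
  have hsum : (Q *ᵥ v) i - a = ∑ k, Q i k * (v k - a) := by
    simp only [mul_sub, sum_sub_distrib, ← sum_mul, sum_row_of_mem_rowStochastic hQ, one_mul]
    rfl
  rw [hsum]
  exact single_le_sum (f := fun k => Q i k * (v k - a))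
    (fun k _ => mul_nonneg (nonneg_of_mem_rowStochastic hQ) (sub_nonneg.2 (hv k))) (mem_univ k₀)

section Spread

variable {ι : Type*} [Fintype ι] [Nonempty ι]

noncomputable def spread (v : ι → ℝ) : ℝ :=
  univ.sup' univ_nonempty v - univ.inf' univ_nonempty v

lemma spread_le_one {v : ι → ℝ} (h0 : ∀ i, 0 ≤ v i) (h1 : ∀ i, v i ≤ 1) : spread v ≤ 1 := by
  have hsup : univ.sup' univ_nonempty v ≤ 1 := sup'_le _ _ fun i _ => h1 i
  have hinf : 0 ≤ univ.inf' univ_nonempty v := le_inf' _ _ fun i _ => h0 i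
  unfold spread
  linarith

lemma abs_sub_sum_div_card_le_spread (v : ι → ℝ) (i : ι) :
    |v i - (∑ k, v k) / Fintype.card ι| ≤ spread v := by
  have hcard : (0 : ℝ) < Fintype.card ι := by exact_mod_cast Fintype.card_pos
  have hlow : Fintype.card ι * univ.inf' univ_nonempty v ≤ ∑ k, v k := by
    simpa using card_nsmul_le_sum univ v _ fun k _ => inf'_le v (mem_univ k)
  have hupp : ∑ k, v k ≤ Fintype.card ι * univ.sup' univ_nonempty v := by
    simpa using sum_le_card_nsmul univ v _ fun k _ => le_sup' v (mem_univ k)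
  have hlow' := (le_div_iff₀' hcard).2 hlow
  have hupp' := (div_le_iff₀' hcard).2 hupp
  have hi := le_sup' v (mem_univ i)
  have hi' := inf'_le v (mem_univ i)
  rw [abs_le, spread]
  constructor <;> linarith

variable [DecidableEq ι] {Q : Matrix ι ι ℝ} {δ : ℝ} {k₀ : ι}

lemma spread_mulVec_le (hQ : Q ∈ rowStochastic ℝ ι) (hδ : ∀ i, δ ≤ Q i k₀) (v : ι → ℝ) :
    spread (Q *ᵥ v) ≤ (1 - δ) * spread v := by
  set M := univ.sup' univ_nonempty v
  set m := univ.inf' univ_nonempty v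
  have hlow : ∀ i, m + δ * (v k₀ - m) ≤ (Q *ᵥ v) i := fun i => by
    have := mul_le_mulVec_apply_sub hQ (v := v) (a := m) (fun k => inf'_le v (mem_univ k)) i k₀
    nlinarith [hδ i, sub_nonneg.2 (inf'_le v (mem_univ k₀))]
  have hupp : ∀ i, (Q *ᵥ v) i ≤ M - δ * (M - v k₀) := fun i => by
    have := mul_le_mulVec_apply_sub hQ (v := -v) (a := -M)
      (fun k => neg_le_neg (le_sup' v (mem_univ k))) i k₀
    simp only [mulVec_neg, Pi.neg_apply] at this
    nlinarith [hδ i, sub_nonneg.2 (le_sup' v (mem_univ k₀))]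
  have hsup := sup'_le univ_nonempty (Q *ᵥ v) fun i _ => hupp i
  have hinf := le_inf' univ_nonempty (Q *ᵥ v) fun i _ => hlow i
  unfold spread
  linarith

lemma spread_pow_mulVec_le (hQ : Q ∈ rowStochastic ℝ ι) (hδ : ∀ i, δ ≤ Q i k₀)
    (v : ι → ℝ) (q : ℕ) : spread (Q ^ q *ᵥ v) ≤ (1 - δ) ^ q * spread v := by
  have hδ1 : 0 ≤ 1 - δ := sub_nonneg.2 ((hδ k₀).trans (le_one_of_mem_rowStochastic hQ))
  induction q with
  | zero => simp
  | succ q ih =>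
    rw [pow_succ', ← mulVec_mulVec, pow_succ', mul_assoc]
    exact (spread_mulVec_le hQ hδ _).trans (mul_le_mul_of_nonneg_left ih hδ1)

theorem abs_pow_apply_sub_inv_card_le {P : Matrix ι ι ℝ} (hP : P ∈ doublyStochastic ℝ ι)
    {m : ℕ} (hδ : ∀ i, δ ≤ (P ^ m) i k₀) (n : ℕ) (i j : ι) :
    |(P ^ n) i j - 1 / Fintype.card ι| ≤ (1 - δ) ^ (n / m) := by
  have hPow : ∀ r, P ^ r ∈ doublyStochastic ℝ ι := fun r => pow_mem hP r
  have hrow : P ^ m ∈ rowStochastic ℝ ι :=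
    (mem_doublyStochastic_iff_mem_rowStochastic_and_mem_colStochastic.1 (hPow m)).1
  have hδ1 : 0 ≤ 1 - δ := sub_nonneg.2 ((hδ k₀).trans (le_one_of_mem_doublyStochastic (hPow m)))
  have hcol : (fun k => (P ^ n) k j) = (P ^ m) ^ (n / m) *ᵥ fun k => (P ^ (n % m)) k j := by
    conv_lhs => rw [← Nat.div_add_mod n m, pow_add, pow_mul]
    rfl
  calc |(P ^ n) i j - 1 / Fintype.card ι|
      = |(P ^ n) i j - (∑ k, (P ^ n) k j) / Fintype.card ι| := by
        rw [sum_col_of_mem_doublyStochastic (hPow n)]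
    _ ≤ spread fun k => (P ^ n) k j := abs_sub_sum_div_card_le_spread (fun k => (P ^ n) k j) i
    _ ≤ (1 - δ) ^ (n / m) * spread fun k => (P ^ (n % m)) k j := by
        rw [hcol]
        exact spread_pow_mulVec_le hrow hδ _ _
    _ ≤ (1 - δ) ^ (n / m) :=
        mul_le_of_le_one_right (pow_nonneg hδ1 _) (spread_le_one
          (fun _ => nonneg_of_mem_doublyStochastic (hPow _))
          (fun _ => le_one_of_mem_doublyStochastic (hPow _)))

end Spread

lemma pow_div_le_rpow_div_sub_one {x : ℝ} (hx0 : 0 < x) (hx1 : x ≤ 1) (n m : ℕ) :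
    x ^ (n / m) ≤ x ^ ((n : ℝ) / m - 1) := by
  rw [← Real.rpow_natCast, ← Nat.floor_div_eq_div (K := ℝ)]
  exact Real.rpow_le_rpow_of_exponent_ge hx0 hx1 (Nat.sub_one_lt_floor _).le

section CyclicRW

variable {N : ℕ}

lemma cyclicRW_transpose : (cyclicRW N)ᵀ = cyclicRW N := by
  ext i j
  refine if_congr ?_ rfl rfl
  constructor <;> rintro (rfl | rfl | rfl) <;> simp

lemma cyclicRW_apply_self_add {e : ℤ} (he : e.natAbs ≤ 1) (i : ZMod N) :
    cyclicRW N i (i + e) = 1 / 3 := by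
  obtain rfl | rfl | rfl : e = -1 ∨ e = 0 ∨ e = 1 := by omega
  all_goals simp [cyclicRW, ← sub_eq_add_neg]

lemma ZMod.card_sub_one_self_add_one (hN : 3 ≤ N) (i : ZMod N) :
    ({i - 1, i, i + 1} : Finset (ZMod N)).card = 3 := by
  have hne : ∀ a : ℕ, 0 < a → a < N → (a : ZMod N) ≠ 0 := fun a ha haN h => by
    have := Nat.le_of_dvd ha ((ZMod.natCast_eq_zero_iff a N).1 h)
    omega
  have h1 : (1 : ZMod N) ≠ 0 := by exact_mod_cast hne 1 one_pos (by omega)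
  have h2 : (2 : ZMod N) ≠ 0 := by exact_mod_cast hne 2 two_pos (by omega)
  rw [card_insert_of_notMem, card_pair]
  · simpa using h1
  · simp only [mem_insert, mem_singleton, not_or]
    refine ⟨by simpa [sub_eq_self] using h1, fun h => h2 ?_⟩
    linear_combination -h

variable [NeZero N]

lemma cyclicRW_mem_doublyStochastic (hN : 3 ≤ N) : cyclicRW N ∈ doublyStochastic ℝ (ZMod N) := by
  have hrow (i : ZMod N) : ∑ j, cyclicRW N i j = 1 := by
    have hind : ∀ j, cyclicRW N i j =
        if j ∈ ({i - 1, i, i + 1} : Finset (ZMod N)) then 1 / 3 else 0 := by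
      simp [cyclicRW]
    rw [sum_congr rfl fun j _ => hind j, sum_ite_mem, univ_inter, sum_const,
      ZMod.card_sub_one_self_add_one hN]
    norm_num
  refine mem_doublyStochastic_iff_sum.2 ⟨fun i j => ?_, hrow, fun j => ?_⟩
  · unfold cyclicRW
    split_ifs <;> norm_num
  · rw [← hrow j]
    exact sum_congr rfl fun i _ => congrFun (congrFun cyclicRW_transpose j) i

lemma one_third_pow_le_cyclicRW_pow_apply_add (hN : 3 ≤ N) {s : ℕ} {d : ℤ} (hd : d.natAbs ≤ s)
    (i : ZMod N) : (1 / 3 : ℝ) ^ s ≤ (cyclicRW N ^ s) i (i + d) := by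
  induction s generalizing d i with
  | zero => simp [show d = 0 by omega]
  | succ s ih =>
    obtain ⟨e, he, hde⟩ : ∃ e : ℤ, e.natAbs ≤ 1 ∧ (d - e).natAbs ≤ s := by
      rcases lt_trichotomy d 0 with h | h | h
      exacts [⟨-1, by omega, by omega⟩, ⟨0, by omega, by omega⟩, ⟨1, by omega, by omega⟩]
    have hstep := ih hde (i + e)
    rw [Int.cast_sub, add_add_sub_cancel] at hstep
    have hP := cyclicRW_mem_doublyStochastic hN
    calc (1 / 3 : ℝ) ^ (s + 1) = cyclicRW N i (i + e) * (1 / 3) ^ s := by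
          rw [cyclicRW_apply_self_add he, pow_succ']
      _ ≤ cyclicRW N i (i + e) * (cyclicRW N ^ s) (i + e) (i + d) :=
          mul_le_mul_of_nonneg_left hstep (nonneg_of_mem_doublyStochastic hP)
      _ ≤ (cyclicRW N ^ (s + 1)) i (i + d) := by
          rw [pow_succ', mul_apply]
          exact single_le_sum (f := fun k => cyclicRW N i k * (cyclicRW N ^ s) k (i + d))
            (fun k _ => mul_nonneg (nonneg_of_mem_doublyStochastic hP)
              (nonneg_of_mem_doublyStochastic (pow_mem hP s))) (mem_univ _)

lemma one_third_pow_le_cyclicRW_pow_apply (hN : 3 ≤ N) (hodd : Odd N) (i k : ZMod N) :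
    (1 / 3 : ℝ) ^ ((N - 1) / 2) ≤ (cyclicRW N ^ ((N - 1) / 2)) i k := by
  have hd : (k - i).valMinAbs.natAbs ≤ (N - 1) / 2 := by
    have := ZMod.natAbs_valMinAbs_le (k - i)
    obtain ⟨t, rfl⟩ := hodd
    omega
  simpa [ZMod.coe_valMinAbs] using one_third_pow_le_cyclicRW_pow_apply_add hN hd i

end CyclicRW

/-- For odd `N ≥ 3`, the cyclic random walk on `ℤ/Nℤ` satisfies
`|(P^n) i j − 1/N| ≤ ((3^{(N−1)/2} − 1)/3^{(N−1)/2})^{(2n/(N−1))−1}`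
(real exponent, real power) for all `n ≥ 1` and all states `i, j`. -/
theorem cyclicRW_convergence_rate_odd (N : ℕ) [NeZero N] (hN : 3 ≤ N) (hodd : Odd N) :
    ∀ n : ℕ, 1 ≤ n → ∀ i j : ZMod N,
      |(cyclicRW N ^ n) i j - 1 / (N : ℝ)| ≤
        (((3 : ℝ) ^ ((N - 1) / 2) - 1) / (3 : ℝ) ^ ((N - 1) / 2)) ^
          (2 * (n : ℝ) / ((N : ℝ) - 1) - 1) := by
  intro n _ i j
  set m := (N - 1) / 2
  have hNm : (N : ℝ) - 1 = 2 * m := by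
    obtain ⟨t, ht⟩ := hodd
    rw [show N = 2 * m + 1 by omega]
    push_cast
    ring
  have hδ : 0 < 1 - (1 / 3 : ℝ) ^ m := sub_pos.2 (pow_lt_one₀ (by norm_num) (by norm_num) (by omega))
  have hbase : ((3 : ℝ) ^ m - 1) / 3 ^ m = 1 - (1 / 3 : ℝ) ^ m := by
    rw [sub_div, div_self (by positivity), _root_.one_div_pow, one_div]
  have hexp : 2 * (n : ℝ) / ((N : ℝ) - 1) = n / m := by
    rw [hNm, mul_div_mul_left _ _ two_ne_zero]
  have hrate := abs_pow_apply_sub_inv_card_le (cyclicRW_mem_doublyStochastic hN)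
    (fun i => one_third_pow_le_cyclicRW_pow_apply hN hodd i 0) n i j
  rw [ZMod.card] at hrate
  rw [hbase, hexp]
  exact hrate.trans (pow_div_le_rpow_div_sub_one hδ (sub_le_self _ (by positivity)) n m)
end

section
/- Let g : ℝ → ℂ be a smooth 2π-periodic function. Suppose G : ℝ × [0,∞) → ℂ is continuous, G(·,t) is smooth and 2π-periodic in x for each t ≥ 0, G is smooth on ℝ × (0,∞), G(x,0) = g(x) for all x, and G satisfies the heat equation ∂G/∂t = ∂²G/∂x² on ℝ × (0,∞). Then for every m ∈ ℤ and t ≥ 0, the spatial Fourier coefficient Ĝ(m,t) = (1/2π)∫_{−π}^{π} G(x,t)e^{−imx}dx equals e^{−m²t}·ĝ(m); consequently G is the unique such solution, and G(x,t) = Σ_{m∈ℤ} e^{−m²t} ĝ(m) e^{imx}. -/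
open Real MeasureTheory intervalIntegral Set AddCircle
open scoped Topology ContDiff


lemma hexp (c : ℂ) (x : ℝ) :
    HasDerivAt (fun y : ℝ => Complex.exp (c * y)) (c * Complex.exp (c * x)) x := by
  have h1 : HasDerivAt (fun z : ℂ => Complex.exp (c * z)) (c * Complex.exp (c * x)) (x : ℂ) := by
    simpa [mul_comm] using ((hasDerivAt_id (x : ℂ)).const_mul c).cexp
  exact h1.comp_ofReal

lemma hexp_m (m : ℤ) (x : ℝ) :
    HasDerivAt (fun y : ℝ => Complex.exp (-Complex.I * m * y))
      (-Complex.I * m * Complex.exp (-Complex.I * m * x)) x := by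
  have := hexp (-Complex.I * m) x
  simpa [mul_assoc] using this

lemma exp_pi_eq (m : ℤ) :
    Complex.exp (-Complex.I * m * (π : ℝ)) = Complex.exp (-Complex.I * m * ((-π : ℝ) : ℂ)) := by
  rw [Complex.exp_eq_exp_iff_exists_int]
  exact ⟨-m, by push_cast; ring⟩

lemma per_ends {f : ℝ → ℂ} (hper : Function.Periodic f (2 * π)) : f π = f (-π) := by
  have := hper (-π)
  rw [show -π + 2 * π = π by ring] at this
  exact this

lemma periodic_deriv' {f : ℝ → ℂ} (hper : Function.Periodic f (2 * π)) :
    Function.Periodic (deriv f) (2 * π) := by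
  intro x
  have h1 : deriv (fun y => f (y + 2 * π)) x = deriv f (x + 2 * π) := by
    simpa using deriv_comp_add_const f (2 * π) x
  rw [← h1]
  congr 1
  ext y; exact hper y

lemma integral_deriv_mul (m : ℤ) (f : ℝ → ℂ) (hf : ContDiff ℝ ∞ f)
    (hper : Function.Periodic f (2 * π)) :
    ∫ x in (-π)..π, deriv f x * Complex.exp (-Complex.I * m * x)
      = Complex.I * m * ∫ x in (-π)..π, f x * Complex.exp (-Complex.I * m * x) := by
  have hu : ∀ x ∈ Set.uIcc (-π) π,
      HasDerivAt (fun y : ℝ => Complex.exp (-Complex.I * m * y))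
        (-Complex.I * m * Complex.exp (-Complex.I * m * x)) x := fun x _ => hexp_m m x
  have hv : ∀ x ∈ Set.uIcc (-π) π, HasDerivAt f (deriv f x) x := fun x _ =>
    (hf.differentiable (by simp) x).hasDerivAt
  have hu' : IntervalIntegrable (fun x : ℝ => -Complex.I * m * Complex.exp (-Complex.I * m * x))
      volume (-π) π := by
    apply Continuous.intervalIntegrable
    exact continuous_const.mul (Complex.continuous_exp.comp (by continuity))
  have hv' : IntervalIntegrable (deriv f) volume (-π) π :=
    (hf.continuous_deriv (by exact_mod_cast le_top)).intervalIntegrable _ _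
  have key := integral_mul_deriv_eq_deriv_mul hu hv hu' hv'
  have hbd : Complex.exp (-Complex.I * m * (π : ℝ)) * f π
      - Complex.exp (-Complex.I * m * ((-π : ℝ) : ℂ)) * f (-π) = 0 := by
    rw [per_ends hper, exp_pi_eq m, sub_self]
  rw [hbd] at key
  have h1 : (∫ x in (-π)..π, deriv f x * Complex.exp (-Complex.I * m * x))
      = ∫ x in (-π)..π, Complex.exp (-Complex.I * m * x) * deriv f x := by
    simp_rw [mul_comm]
  rw [h1, key, zero_sub, ← intervalIntegral.integral_neg]
  rw [← intervalIntegral.integral_const_mul]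
  congr 1; ext x; ring

lemma integral_deriv2_mul (m : ℤ) (f : ℝ → ℂ) (hf : ContDiff ℝ ∞ f)
    (hper : Function.Periodic f (2 * π)) :
    ∫ x in (-π)..π, deriv (deriv f) x * Complex.exp (-Complex.I * m * x)
      = -(m : ℂ) ^ 2 * ∫ x in (-π)..π, f x * Complex.exp (-Complex.I * m * x) := by
  have hf' : ContDiff ℝ ∞ (deriv f) := (contDiff_infty_iff_deriv.mp hf).2
  rw [integral_deriv_mul m (deriv f) hf' (periodic_deriv' hper),
    integral_deriv_mul m f hf hper, ← mul_assoc]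
  congr 1
  have : Complex.I * Complex.I = -1 := Complex.I_mul_I
  ring_nf
  rw [Complex.I_sq]
  ring


lemma norm_exp_m (m : ℤ) (x : ℝ) : ‖Complex.exp (-Complex.I * m * x)‖ = 1 := by
  rw [Complex.norm_exp]
  have : (-Complex.I * (m : ℂ) * (x : ℝ)).re = 0 := by simp
  rw [this, Real.exp_zero]

lemma coef_bound {f : ℝ → ℂ} (hf : Continuous f) :
    ∃ C : ℝ, 0 ≤ C ∧ ∀ m : ℤ,
      ‖∫ x in (-π)..π, f x * Complex.exp (-Complex.I * m * x)‖ ≤ C := by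
  obtain ⟨C, hC⟩ := (isCompact_uIcc (a := -π) (b := π)).exists_bound_of_continuousOn
    hf.continuousOn
  refine ⟨(max C 0) * |π - (-π)|, by positivity, fun m => ?_⟩
  apply intervalIntegral.norm_integral_le_of_norm_le_const
  intro x hx
  rw [norm_mul, norm_exp_m, mul_one]
  exact le_trans (hC x (Set.uIoc_subset_uIcc hx)) (le_max_left _ _)

lemma summable_integrals {f : ℝ → ℂ} (hf : ContDiff ℝ ∞ f)
    (hper : Function.Periodic f (2 * π))
    (hkey : ∀ m : ℤ, m ≠ 0 → ∫ x in (-π)..π, f x * Complex.exp (-Complex.I * m * x)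
      = (-(m:ℂ)^2)⁻¹ * ∫ x in (-π)..π, deriv (deriv f) x * Complex.exp (-Complex.I * m * x)) :
    Summable (fun m : ℤ => ∫ x in (-π)..π, f x * Complex.exp (-Complex.I * m * x)) := by
  have hf'' : Continuous (deriv (deriv f)) :=
    ((contDiff_infty_iff_deriv.mp hf).2.continuous_deriv (by exact_mod_cast le_top))
  obtain ⟨C, hC0, hC⟩ := coef_bound hf''
  apply Summable.of_norm_bounded_eventually (g := fun m : ℤ => C * (1 / (m:ℝ)^2))
  · exact (summable_one_div_int_pow.mpr one_lt_two).mul_left C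
  · have : {m : ℤ | ¬ ‖∫ x in (-π)..π, f x * Complex.exp (-Complex.I * m * x)‖
        ≤ C * (1 / (m:ℝ)^2)} ⊆ {0} := by
      intro m hm
      simp only [Set.mem_setOf_eq] at hm
      by_contra h0
      apply hm
      rw [hkey m (by simpa using h0), norm_mul]
      have h2 : ‖(-(m:ℂ)^2)⁻¹‖ = 1 / (m:ℝ)^2 := by
        rw [norm_inv, norm_neg, norm_pow, Complex.norm_intCast, one_div]
        congr 1
        push_cast [sq_abs]
        ring
      rw [h2]
      rw [mul_comm C _, one_div]
      gcongr
      · exact hC m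
    exact Filter.eventually_cofinite.mpr (Set.Finite.subset (Set.finite_singleton 0) this)


lemma ode_exp {F : ℝ → ℂ} {c : ℂ}
    (hcont : ContinuousWithinAt F (Set.Ici 0) 0)
    (hderiv : ∀ t : ℝ, 0 < t → HasDerivAt F (c * F t) t) :
    ∀ t : ℝ, 0 ≤ t → F t = Complex.exp (c * t) * F 0 := by
  set H : ℝ → ℂ := fun s => Complex.exp (-c * s) * F s with hH
  have hHderiv : ∀ s : ℝ, 0 < s → HasDerivAt H 0 s := by
    intro s hs
    have h1 : HasDerivAt (fun y : ℝ => Complex.exp (-c * y))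
        (-c * Complex.exp (-c * s)) s := by
      have h2 : HasDerivAt (fun z : ℂ => Complex.exp (-c * z))
          (-c * Complex.exp (-c * s)) (s : ℂ) := by
        simpa [mul_comm] using ((hasDerivAt_id (s : ℂ)).const_mul (-c)).cexp
      exact h2.comp_ofReal
    have : HasDerivAt (fun y : ℝ => Complex.exp (-c * y) * F y) _ s := h1.mul (hderiv s hs)
    convert this using 1
    ring
  intro t ht
  rcases eq_or_lt_of_le ht with h0 | h0
  · rw [← h0]; simp
  -- H is constant on (0, t], equal to H t
  have hconst : ∀ ε : ℝ, 0 < ε → ε ≤ t → H t = H ε := by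
    intro ε hε hεt
    have : ∀ y ∈ Set.Icc ε t, H y = H ε := by
      apply constant_of_has_deriv_right_zero
      · intro y hy
        exact ((hHderiv y (lt_of_lt_of_le hε hy.1)).continuousAt).continuousWithinAt
      · intro y hy
        exact (hHderiv y (lt_of_lt_of_le hε hy.1)).hasDerivWithinAt
    exact this t ⟨hεt, le_refl t⟩
  have hHcont : ContinuousWithinAt H (Set.Ici 0) 0 := by
    apply ContinuousWithinAt.mul _ hcont
    exact ((Complex.continuous_exp.comp (by continuity)).continuousAt).continuousWithinAt
  have htend : Filter.Tendsto H (nhdsWithin 0 (Set.Ioi 0)) (nhds (H 0)) :=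
    hHcont.tendsto.mono_left (nhdsWithin_mono 0 Set.Ioi_subset_Ici_self)
  have heq : H =ᶠ[nhdsWithin 0 (Set.Ioi 0)] (fun _ => H t) := by
    have hmem : Set.Ioc 0 t ∈ nhdsWithin 0 (Set.Ioi 0) :=
      Ioc_mem_nhdsGT h0
    filter_upwards [hmem] with ε hε
    exact (hconst ε hε.1 hε.2).symm
  have : Filter.Tendsto (fun _ : ℝ => H t) (nhdsWithin 0 (Set.Ioi 0)) (nhds (H 0)) :=
    htend.congr' heq
  have hHt : H t = H 0 := tendsto_nhds_unique (l := nhdsWithin (0:ℝ) (Set.Ioi 0)) tendsto_const_nhds this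
  -- unfold
  have : Complex.exp (-c * t) * F t = F 0 := by
    have h00 : H 0 = F 0 := by simp [hH]
    rw [← h00, ← hHt]
  calc F t = Complex.exp (c * t) * (Complex.exp (-c * t) * F t) := by
        rw [← mul_assoc, ← Complex.exp_add]
        simp
    _ = Complex.exp (c * t) * F 0 := by rw [this]


instance fact_two_pi_pos : Fact (0 < 2 * π) := ⟨by positivity⟩

lemma lift_eq {f : ℝ → ℂ} (hper : Function.Periodic f (2 * π)) (x : ℝ) :
    AddCircle.liftIco (2 * π) (-π) f ((x : ℝ) : AddCircle (2 * π)) = f x := by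
  have hp : 0 < 2 * π := by positivity
  set y := toIcoMod hp (-π) x with hy
  have hmem : y ∈ Set.Ico (-π) (-π + 2 * π) := toIcoMod_mem_Ico hp (-π) x
  have hcoe : ((y : ℝ) : AddCircle (2 * π)) = ((x : ℝ) : AddCircle (2 * π)) := by
    rw [hy, toIcoMod]
    apply (QuotientAddGroup.eq_iff_sub_mem).mpr
    rw [sub_sub_cancel_left, ← neg_zsmul]
    exact AddSubgroup.zsmul_mem _ (AddSubgroup.mem_zmultiples _) _
  have hfy : f y = f x := by
    rw [hy, toIcoMod]
    exact hper.sub_zsmul_eq _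
  rw [← hcoe, AddCircle.liftIco_coe_apply hmem, hfy]

lemma fourier_eq_exp (n : ℤ) (x : ℝ) :
    (fourier n ((x : ℝ) : AddCircle (2 * π)) : ℂ) = Complex.exp (Complex.I * n * x) := by
  rw [fourier_coe_apply]
  congr 1
  have hπ : (π : ℂ) ≠ 0 := by exact_mod_cast Real.pi_ne_zero
  push_cast
  field_simp

lemma coef_via_circle {f : ℝ → ℂ} (hper : Function.Periodic f (2 * π)) (m : ℤ) :
    fourierCoeff (AddCircle.liftIco (2 * π) (-π) f) m
      = (1 / (2 * (π : ℂ))) * ∫ x in (-π)..π, f x * Complex.exp (-Complex.I * m * x) := by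
  rw [fourierCoeff_eq_intervalIntegral _ m (-π)]
  rw [show -π + 2 * π = π by ring]
  have h1 : ∀ x : ℝ, (fourier (-m) ((x : ℝ) : AddCircle (2 * π)) : ℂ)
      • AddCircle.liftIco (2 * π) (-π) f ((x : ℝ) : AddCircle (2 * π))
      = f x * Complex.exp (-Complex.I * m * x) := by
    intro x
    rw [smul_eq_mul, lift_eq hper, fourier_eq_exp, mul_comm]
    congr 2
    push_cast
    ring
  rw [intervalIntegral.integral_congr (fun x _ => h1 x)]
  rw [Complex.real_smul]
  congr 1
  push_cast
  ring

lemma inversion {f : ℝ → ℂ} (hcont : Continuous f) (hper : Function.Periodic f (2 * π))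
    (hsum : Summable (fun m : ℤ => ∫ x in (-π)..π, f x * Complex.exp (-Complex.I * m * x)))
    (x : ℝ) :
    HasSum (fun m : ℤ =>
      ((1 / (2 * (π : ℂ))) * ∫ y in (-π)..π, f y * Complex.exp (-Complex.I * m * y))
        * Complex.exp (Complex.I * m * x)) (f x) := by
  have hend : f (-π) = f (-π + 2 * π) := (hper (-π)).symm
  set F : C(AddCircle (2 * π), ℂ) :=
    ⟨AddCircle.liftIco (2 * π) (-π) f, AddCircle.liftIco_continuous hend hcont.continuousOn⟩
    with hF
  have hcoef : ∀ m : ℤ, fourierCoeff (F : AddCircle (2 * π) → ℂ) m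
      = (1 / (2 * (π : ℂ))) * ∫ y in (-π)..π, f y * Complex.exp (-Complex.I * m * y) :=
    fun m => coef_via_circle hper m
  have hsum' : Summable (fourierCoeff (F : AddCircle (2 * π) → ℂ)) := by
    rw [show fourierCoeff (F : AddCircle (2 * π) → ℂ) = fun (m : ℤ) =>
      (1 / (2 * (π : ℂ))) * ∫ y in (-π)..π, f y * Complex.exp (-Complex.I * m * y)
      from funext hcoef]
    exact hsum.mul_left _
  have h := has_pointwise_sum_fourier_series_of_summable hsum' ((x : ℝ) : AddCircle (2 * π))
  have hFx : F ((x : ℝ) : AddCircle (2 * π)) = f x := lift_eq hper x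
  rw [hFx] at h
  convert h using 2 with m
  rw [hcoef m, smul_eq_mul, fourier_eq_exp]

lemma norm_exp_m' (m : ℤ) (x : ℝ) : ‖Complex.exp (-Complex.I * m * x)‖ = 1 := by
  rw [Complex.norm_exp]
  have : (-Complex.I * (m : ℂ) * (x : ℝ)).re = 0 := by simp
  rw [this, Real.exp_zero]

lemma cont_exp_m (m : ℤ) : Continuous (fun x : ℝ => Complex.exp (-Complex.I * m * x)) :=
  Complex.continuous_exp.comp (by continuity)

theorem heatCoef (G : ℝ → ℝ → ℂ)
    (hGcont : ContinuousOn (fun p : ℝ × ℝ => G p.1 p.2) (Set.univ ×ˢ Set.Ici 0))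
    (hGx : ∀ t : ℝ, 0 ≤ t →
      ContDiff ℝ (⊤ : ℕ∞) (fun x => G x t) ∧ Function.Periodic (fun x => G x t) (2 * π))
    (hGsmooth : ContDiffOn ℝ (⊤ : ℕ∞) (fun p : ℝ × ℝ => G p.1 p.2) (Set.univ ×ˢ Set.Ioi 0))
    (hGheat : ∀ x t : ℝ, 0 < t →
      deriv (fun s => G x s) t = iteratedDeriv 2 (fun y => G y t) x)
    (m : ℤ) :
    ∀ t : ℝ, 0 ≤ t → (∫ x in (-π)..π, G x t * Complex.exp (-Complex.I * m * x))
      = Complex.exp (-(m : ℂ) ^ 2 * t) * ∫ x in (-π)..π, G x 0 * Complex.exp (-Complex.I * m * x) := by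
  set uH : ℝ × ℝ → ℂ := fun p => G p.1 p.2 with huH
  set U : Set (ℝ × ℝ) := Set.univ ×ˢ Set.Ioi 0 with hUdef
  have hU : IsOpen U := isOpen_univ.prod isOpen_Ioi
  set Fm : ℝ → ℂ := fun t => ∫ x in (-π)..π, G x t * Complex.exp (-Complex.I * m * x) with hFm
  set D : ℝ × ℝ → ℂ := fun p => fderiv ℝ uH p (0, 1) with hD
  have hDcont : ContinuousOn D U := by
    have h1 : ContinuousOn (fderiv ℝ uH) U :=
      hGsmooth.continuousOn_fderiv_of_isOpen hU (by simp)
    exact (ContinuousLinearMap.apply ℝ ℂ ((0 : ℝ), (1 : ℝ))).continuous.comp_continuousOn h1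
  have hDeriv : ∀ x t : ℝ, 0 < t → HasDerivAt (fun s => G x s) (D (x, t)) t := by
    intro x t ht
    have hmem : (x, t) ∈ U := ⟨trivial, ht⟩
    have hdiff : DifferentiableAt ℝ uH (x, t) :=
      (hGsmooth.differentiableOn (by simp)).differentiableAt (hU.mem_nhds hmem)
    have hline : HasDerivAt (fun s : ℝ => ((x, s) : ℝ × ℝ)) ((0 : ℝ), (1 : ℝ)) t :=
      HasDerivAt.prodMk (hasDerivAt_const t x) (hasDerivAt_id t)
    exact hdiff.hasFDerivAt.comp_hasDerivAt t hline
  have hDval : ∀ x t : ℝ, 0 < t → deriv (fun s => G x s) t = D (x, t) :=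
    fun x t ht => (hDeriv x t ht).deriv
  -- continuity at 0 within Ici 0
  have hcont0 : ContinuousWithinAt Fm (Set.Ici 0) 0 := by
    have hK : IsCompact ((Set.Icc (-π) π) ×ˢ (Set.Icc (0:ℝ) 1)) :=
      isCompact_Icc.prod isCompact_Icc
    obtain ⟨C, hC⟩ := hK.exists_bound_of_continuousOn
      (hGcont.mono (by intro p hp; exact ⟨trivial, hp.2.1⟩))
    apply intervalIntegral.continuousWithinAt_of_dominated_interval
      (bound := fun _ => C)
    · filter_upwards [self_mem_nhdsWithin] with t ht
      exact (((hGx t ht).1.continuous).mul (cont_exp_m m)).aestronglyMeasurable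
    · have hmem : Set.Icc (0:ℝ) 1 ∈ 𝓝[Set.Ici 0] (0:ℝ) := by
        apply Filter.inter_mem self_mem_nhdsWithin
        exact nhdsWithin_le_nhds (Iic_mem_nhds one_pos)
      filter_upwards [hmem] with t ht
      apply Filter.Eventually.of_forall
      intro x hx
      rw [norm_mul, norm_exp_m', mul_one]
      have hx' : x ∈ Set.Icc (-π) π := by
        have := Set.uIoc_subset_uIcc hx
        rwa [Set.uIcc_of_le (by linarith [Real.pi_pos]) ] at this
      exact hC (x, t) ⟨hx', ht⟩
    · exact intervalIntegrable_const
    · apply Filter.Eventually.of_forall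
      intro x _
      have h1 : ContinuousWithinAt (fun t : ℝ => G x t) (Set.Ici 0) 0 := by
        have := (hGcont (x, 0) ⟨trivial, Set.mem_Ici.mpr (le_refl 0)⟩).comp
          ((continuous_const.prodMk continuous_id).continuousWithinAt
            (x := (0:ℝ)) (s := Set.Ici 0))
          (by intro t ht; exact ⟨trivial, ht⟩)
        exact this
      exact h1.mul continuousWithinAt_const
  -- derivative for t > 0
  have hderiv : ∀ t : ℝ, 0 < t → HasDerivAt Fm (-(m:ℂ)^2 * Fm t) t := by
    intro t₀ ht₀
    have hKc : IsCompact ((Set.Icc (-π) π) ×ˢ (Set.Icc (t₀/2) (3*t₀/2))) :=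
      isCompact_Icc.prod isCompact_Icc
    have hKU : ((Set.Icc (-π) π) ×ˢ (Set.Icc (t₀/2) (3*t₀/2))) ⊆ U := by
      intro p hp; exact ⟨trivial, by have := hp.2.1; simp only [Set.mem_Ioi]; linarith⟩
    obtain ⟨C, hC⟩ := hKc.exists_bound_of_continuousOn (hDcont.mono hKU)
    have hball : ∀ s ∈ Metric.ball t₀ (t₀/2), s ∈ Set.Icc (t₀/2) (3*t₀/2) ∧ 0 < s := by
      intro s hs
      rw [Metric.mem_ball, Real.dist_eq, abs_lt] at hs
      constructor
      · constructor <;> linarith [hs.1, hs.2]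
      · linarith [hs.1]
    have hxIcc : ∀ x : ℝ, x ∈ Set.uIoc (-π) π → x ∈ Set.Icc (-π) π := by
      intro x hx
      have := Set.uIoc_subset_uIcc hx
      rwa [Set.uIcc_of_le (by linarith [Real.pi_pos])] at this
    have key := intervalIntegral.hasDerivAt_integral_of_dominated_loc_of_deriv_le
      (F := fun t x => G x t * Complex.exp (-Complex.I * m * x))
      (F' := fun t x => D (x, t) * Complex.exp (-Complex.I * m * x))
      (x₀ := t₀) (s := Metric.ball t₀ (t₀/2)) (a := -π) (b := π) (μ := volume)
      (bound := fun _ => C)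
      (Metric.ball_mem_nhds _ (by linarith))
      (by
        filter_upwards [eventually_gt_nhds (by linarith : (0:ℝ) < t₀)] with t ht
        exact (((hGx t ht.le).1.continuous).mul (cont_exp_m m)).aestronglyMeasurable)
      ((((hGx t₀ ht₀.le).1.continuous).mul (cont_exp_m m)).intervalIntegrable _ _)
      (by
        have hcD : ContinuousOn (fun x : ℝ => D (x, t₀)) Set.univ :=
          hDcont.comp ((continuous_id.prodMk continuous_const).continuousOn)
            (fun x _ => ⟨trivial, ht₀⟩)
        have : Continuous (fun x : ℝ => D (x, t₀)) :=
          continuousOn_univ.mp hcD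
        exact (this.mul (cont_exp_m m)).aestronglyMeasurable)
      (by
        apply Filter.Eventually.of_forall
        intro x hx t ht
        rw [norm_mul, norm_exp_m', mul_one]
        exact hC (x, t) ⟨hxIcc x hx, (hball t ht).1⟩)
      intervalIntegrable_const
      (by
        apply Filter.Eventually.of_forall
        intro x hx t ht
        exact (hDeriv x t (hball t ht).2).mul_const _)
    have hval : (∫ x in (-π)..π, D (x, t₀) * Complex.exp (-Complex.I * m * x))
        = -(m:ℂ)^2 * Fm t₀ := by
      have h1 : ∀ x : ℝ, D (x, t₀) = deriv (deriv (fun y => G y t₀)) x := by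
        intro x
        rw [← hDval x t₀ ht₀, hGheat x t₀ ht₀, iteratedDeriv_succ, iteratedDeriv_one]
      calc (∫ x in (-π)..π, D (x, t₀) * Complex.exp (-Complex.I * m * x))
          = ∫ x in (-π)..π, deriv (deriv (fun y => G y t₀)) x
              * Complex.exp (-Complex.I * m * x) :=
            intervalIntegral.integral_congr (fun x _ => by rw [h1 x])
        _ = -(m:ℂ)^2 * Fm t₀ := by
            rw [integral_deriv2_mul m (fun y => G y t₀)
              ((hGx t₀ ht₀.le).1.of_le (by simp)) (hGx t₀ ht₀.le).2]
    rw [← hval]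
    exact key.2
  have := ode_exp hcont0 hderiv
  intro t ht
  exact this t ht


/-- If `G` is a solution of the heat equation on `ℝ × (0,∞)`,
continuous on `ℝ × [0,∞)`, smooth and `2π`-periodic in space, with smooth
`2π`-periodic initial condition `g`, then its spatial Fourier coefficients
satisfy `Ĝ(m,t) = e^{−m²t}·ĝ(m)`; consequently `G` is the unique such solution
and `G(x,t) = Σ_{m∈ℤ} e^{−m²t} ĝ(m) e^{imx}`. -/
theorem heat_solution_unique
    (g : ℝ → ℂ) (hg : ContDiff ℝ (⊤ : ℕ∞) g) (hgper : Function.Periodic g (2 * π))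
    (ghat : ℤ → ℂ)
    (hghat : ∀ m : ℤ, ghat m =
      (1 / (2 * (π : ℂ))) * ∫ x in (-π)..π, g x * Complex.exp (-Complex.I * m * x))
    (G : ℝ → ℝ → ℂ)
    (hGcont : ContinuousOn (fun p : ℝ × ℝ => G p.1 p.2) (Set.univ ×ˢ Set.Ici 0))
    (hGx : ∀ t : ℝ, 0 ≤ t →
      ContDiff ℝ (⊤ : ℕ∞) (fun x => G x t) ∧ Function.Periodic (fun x => G x t) (2 * π))
    (hGsmooth : ContDiffOn ℝ (⊤ : ℕ∞) (fun p : ℝ × ℝ => G p.1 p.2) (Set.univ ×ˢ Set.Ioi 0))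
    (hG0 : ∀ x : ℝ, G x 0 = g x)
    (hGheat : ∀ x t : ℝ, 0 < t →
      deriv (fun s => G x s) t = iteratedDeriv 2 (fun y => G y t) x) :
    (∀ (m : ℤ) (t : ℝ), 0 ≤ t →
      (1 / (2 * (π : ℂ))) * ∫ x in (-π)..π, G x t * Complex.exp (-Complex.I * m * x)
        = Complex.exp (-(m : ℂ) ^ 2 * t) * ghat m) ∧
    (∀ x t : ℝ, 0 ≤ t → G x t =
      ∑' m : ℤ, Complex.exp (-(m : ℂ) ^ 2 * t) * ghat m * Complex.exp (Complex.I * m * x)) ∧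
    (∀ G₂ : ℝ → ℝ → ℂ,
      ContinuousOn (fun p : ℝ × ℝ => G₂ p.1 p.2) (Set.univ ×ˢ Set.Ici 0) →
      (∀ t : ℝ, 0 ≤ t →
        ContDiff ℝ (⊤ : ℕ∞) (fun x => G₂ x t) ∧ Function.Periodic (fun x => G₂ x t) (2 * π)) →
      ContDiffOn ℝ (⊤ : ℕ∞) (fun p : ℝ × ℝ => G₂ p.1 p.2) (Set.univ ×ˢ Set.Ioi 0) →
      (∀ x : ℝ, G₂ x 0 = g x) →
      (∀ x t : ℝ, 0 < t →
        deriv (fun s => G₂ x s) t = iteratedDeriv 2 (fun y => G₂ y t) x) →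
      ∀ x t : ℝ, 0 ≤ t → G₂ x t = G x t) := by
  classical
  have hsumg : Summable (fun m : ℤ => ∫ x in (-π)..π, g x * Complex.exp (-Complex.I * m * x)) := by
    apply summable_integrals (hg.of_le (by simp)) hgper
    intro m hm
    have h2 := integral_deriv2_mul m g (hg.of_le (by simp)) hgper
    have hm2 : (-(m:ℂ)^2) ≠ 0 :=
      neg_ne_zero.mpr (pow_ne_zero 2 (Int.cast_ne_zero.mpr hm))
    rw [h2, ← mul_assoc, inv_mul_cancel₀ hm2, one_mul]
  have main : ∀ (H : ℝ → ℝ → ℂ),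
      ContinuousOn (fun p : ℝ × ℝ => H p.1 p.2) (Set.univ ×ˢ Set.Ici 0) →
      (∀ t : ℝ, 0 ≤ t →
        ContDiff ℝ (⊤ : ℕ∞) (fun x => H x t) ∧ Function.Periodic (fun x => H x t) (2 * π)) →
      ContDiffOn ℝ (⊤ : ℕ∞) (fun p : ℝ × ℝ => H p.1 p.2) (Set.univ ×ˢ Set.Ioi 0) →
      (∀ x : ℝ, H x 0 = g x) →
      (∀ x t : ℝ, 0 < t →
        deriv (fun s => H x s) t = iteratedDeriv 2 (fun y => H y t) x) →
      (∀ (m : ℤ) (t : ℝ), 0 ≤ t →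
        (1 / (2 * (π : ℂ))) * ∫ x in (-π)..π, H x t * Complex.exp (-Complex.I * m * x)
          = Complex.exp (-(m : ℂ) ^ 2 * t) * ghat m) ∧
      (∀ x t : ℝ, 0 ≤ t → H x t =
        ∑' m : ℤ, Complex.exp (-(m : ℂ) ^ 2 * t) * ghat m
          * Complex.exp (Complex.I * m * x)) := by
    intro H hc hx hs h0 hh
    have hcoefH := heatCoef H hc hx hs hh
    have hH0int : ∀ m : ℤ, (∫ x in (-π)..π, H x 0 * Complex.exp (-Complex.I * m * x))
        = ∫ x in (-π)..π, g x * Complex.exp (-Complex.I * m * x) :=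
      fun m => intervalIntegral.integral_congr (fun x _ => by rw [h0 x])
    have part1 : ∀ (m : ℤ) (t : ℝ), 0 ≤ t →
        (1 / (2 * (π : ℂ))) * ∫ x in (-π)..π, H x t * Complex.exp (-Complex.I * m * x)
          = Complex.exp (-(m : ℂ) ^ 2 * t) * ghat m := by
      intro m t ht
      rw [hcoefH m t ht, hH0int m, hghat m]
      ring
    refine ⟨part1, ?_⟩
    intro x t ht
    have hnorm_exp : ∀ m : ℤ, ‖Complex.exp (-(m:ℂ)^2 * t)‖ ≤ 1 := by
      intro m
      have harg : -(m:ℂ)^2 * t = ((-(m:ℝ)^2 * t : ℝ) : ℂ) := by push_cast; ring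
      rw [harg, Complex.norm_exp_ofReal]
      apply Real.exp_le_one_iff.mpr
      have : (0:ℝ) ≤ (m:ℝ)^2 * t := mul_nonneg (sq_nonneg _) ht
      linarith
    have hsumH : Summable (fun m : ℤ =>
        ∫ y in (-π)..π, H y t * Complex.exp (-Complex.I * m * y)) := by
      apply Summable.of_norm_bounded
        (g := fun m : ℤ => ‖∫ x in (-π)..π, g x * Complex.exp (-Complex.I * m * x)‖) hsumg.norm
      intro m
      rw [hcoefH m t ht, hH0int m, norm_mul]
      calc ‖Complex.exp (-(m:ℂ)^2 * t)‖
            * ‖∫ x in (-π)..π, g x * Complex.exp (-Complex.I * m * x)‖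
          ≤ 1 * ‖∫ x in (-π)..π, g x * Complex.exp (-Complex.I * m * x)‖ := by
            apply mul_le_mul_of_nonneg_right (hnorm_exp m) (norm_nonneg _)
        _ = _ := one_mul _
    have hinv := inversion ((hx t ht).1.continuous) ((hx t ht).2) hsumH x
    rw [show (fun m : ℤ =>
        ((1 / (2 * (π : ℂ))) * ∫ y in (-π)..π, H y t * Complex.exp (-Complex.I * m * y))
          * Complex.exp (Complex.I * m * x))
        = fun m : ℤ => Complex.exp (-(m : ℂ) ^ 2 * t) * ghat m
          * Complex.exp (Complex.I * m * x)
      from funext fun m => by rw [part1 m t ht]] at hinv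
    exact hinv.tsum_eq.symm
  obtain ⟨p1, p2⟩ := main G hGcont hGx hGsmooth hG0 hGheat
  refine ⟨p1, p2, ?_⟩
  intro G₂ hc2 hx2 hs2 h02 hh2 x t ht
  obtain ⟨q1, q2⟩ := main G₂ hc2 hx2 hs2 h02 hh2
  rw [q2 x t ht, p2 x t ht]
end

section
/- Fix an integer η ≥ 2 and let f : ℤ/2ηℤ → ℂ be a function on the fine grid of 2η points. Then for every integer m with −η/2 ≤ m ≤ η/2, the coarse Fourier coefficient of the restriction of the discrete second derivative satisfies (f″)‾^(m) = ψ_η(m)²·U_η(m)·(f̄)^(m), where ψ_η(m) = (η/(2π))·(1 − e^{2πim/η}) and U_η(m) = e^{−2πim/η}. -/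
open Real Finset

/-- The discrete derivative of a function on the fine grid of `2η` points
`x_j = −π + jπ/η`: `f′(j) = (η/(2π))·(f(j+1) − f(j−1))`, indices mod `2η`. -/
noncomputable def dderiv (η : ℕ) (f : ZMod (2 * η) → ℂ) : ZMod (2 * η) → ℂ :=
  fun j => ((η : ℂ) / (2 * (π : ℂ))) * (f (j + 1) - f (j - 1))

/-- The restriction of `f` to the coarse grid of `η` points: `f̄(i) = f(2i)`. -/
def restr (η : ℕ) (f : ZMod (2 * η) → ℂ) : ZMod η → ℂ :=
  fun i => f ((2 * i.val : ℕ) : ZMod (2 * η))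

/-- The `m`-th coarse Fourier coefficient:
`ĥ(m) = (1/η)·Σ_{i=0}^{η−1} h(i)·e^{−i m y_i}` with `y_i = −π + 2πi/η`. -/
noncomputable def coarseFourier (η : ℕ) (h : ZMod η → ℂ) (m : ℤ) : ℂ :=
  (1 / (η : ℂ)) * ∑ i ∈ range η,
    h i * Complex.exp (-Complex.I * m * (-(π : ℂ) + 2 * π * i / η))

/-- `ψ_η(m) = (η/(2π))·(1 − e^{2πim/η})`. -/
noncomputable def psiEta (η : ℕ) (m : ℤ) : ℂ :=
  ((η : ℂ) / (2 * (π : ℂ))) * (1 - Complex.exp (2 * π * Complex.I * m / η))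

/-- `U_η(m) = e^{−2πim/η}`. -/
noncomputable def UEta (η : ℕ) (m : ℤ) : ℂ :=
  Complex.exp (-(2 * π * Complex.I * m / η))

/-! On the even points, two centred differences of step `π/η` make one centred second
difference of step `2π/η`, since `i ↦ 2 * i.val` turns `i ± 1` into `j ± 2`:
`(f″)‾(i) = c² (f̄(i+1) − 2 f̄(i) + f̄(i−1))` with `c = η/(2π)`. Up to the factor `e^{iπm}/η` the
coarse coefficient is the discrete Fourier transform on `ZMod η` at `m`, which turns
translation by `±1` into multiplication by `w^{±1}`, `w = e^{2πim/η}`. Hence the coefficient is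
multiplied by `c² (w − 2 + w⁻¹) = c² (1 − w)² w⁻¹ = ψ_η(m)² U_η(m)`. -/

namespace ZMod

variable {N : ℕ}

lemma sum_range_natCast [NeZero N] {M : Type*} [AddCommMonoid M] (F : ZMod N → M) :
    ∑ i ∈ range N, F i = ∑ j : ZMod N, F j :=
  Finset.sum_bij' (fun i _ => (i : ZMod N)) (fun j _ => j.val) (by simp) (by simp [val_lt])
    (fun i hi => val_natCast_of_lt (mem_range.mp hi)) (fun j _ => natCast_zmod_val j)
    (fun _ _ => rfl)

lemma natCast_two_mul_val_natCast (x : ℕ) :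
    ((2 * (x : ZMod N).val : ℕ) : ZMod (2 * N)) = 2 * x := by
  rw [val_natCast, ← Nat.mul_mod_mul_left, natCast_mod]
  push_cast
  rfl

lemma natCast_two_mul_val_add_one [NeZero N] (i : ZMod N) :
    ((2 * (i + 1).val : ℕ) : ZMod (2 * N)) = ((2 * i.val : ℕ) : ZMod (2 * N)) + 2 := by
  rw [← natCast_zmod_val i, ← Nat.cast_succ, natCast_two_mul_val_natCast,
    natCast_two_mul_val_natCast]
  push_cast
  ring

lemma natCast_two_mul_val_sub_one [NeZero N] (i : ZMod N) :
    ((2 * (i - 1).val : ℕ) : ZMod (2 * N)) = ((2 * i.val : ℕ) : ZMod (2 * N)) - 2 := by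
  rw [eq_sub_iff_add_eq, ← natCast_two_mul_val_add_one, sub_add_cancel]

variable [NeZero N] {E : Type*} [AddCommGroup E] [Module ℂ E]

lemma dft_comp_add_right (Φ : ZMod N → E) (a k : ZMod N) :
    𝓕 (fun j => Φ (j + a)) k = stdAddChar (a * k) • 𝓕 Φ k := by
  simp only [dft_apply, Finset.smul_sum, smul_smul, ← AddChar.map_add_eq_mul]
  refine Fintype.sum_equiv (Equiv.addRight a) _ _ fun j => ?_
  simp only [Equiv.coe_addRight]
  ring_nf

end ZMod

open ZMod

lemma coarseFourier_eq_dft (η : ℕ) [NeZero η] (h : ZMod η → ℂ) (m : ℤ) :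
    coarseFourier η h m = (η : ℂ)⁻¹ * Complex.exp (π * Complex.I * m) * 𝓕 h (m : ZMod η) := by
  have term : ∀ i : ℕ, h i * Complex.exp (-Complex.I * m * (-(π : ℂ) + 2 * π * i / η)) =
      Complex.exp (π * Complex.I * m) * (stdAddChar (-((i : ZMod η) * (m : ZMod η))) • h i) := by
    intro i
    have hη : (η : ℂ) ≠ 0 := NeZero.ne _
    rw [show -((i : ZMod η) * (m : ZMod η)) = ((-(i * m) : ℤ) : ZMod η) by push_cast; rfl,
      stdAddChar_coe, smul_eq_mul, ← mul_assoc, ← Complex.exp_add, mul_comm]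
    congr 2
    push_cast
    field_simp
    ring
  simp only [coarseFourier, term, ← Finset.mul_sum]
  rw [sum_range_natCast (fun j : ZMod η => stdAddChar (-(j * (m : ZMod η))) • h j), ← dft_apply]
  ring

lemma dderiv_dderiv (η : ℕ) (f : ZMod (2 * η) → ℂ) (j : ZMod (2 * η)) :
    dderiv η (dderiv η f) j = ((η : ℂ) / (2 * π)) ^ 2 * (f (j + 2) - 2 * f j + f (j - 2)) := by
  simp only [dderiv]
  rw [show j + 1 + 1 = j + 2 by ring, show j + 1 - 1 = j by ring,
    show j - 1 + 1 = j by ring, show j - 1 - 1 = j - 2 by ring]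
  ring

lemma restr_dderiv_dderiv (η : ℕ) [NeZero η] (f : ZMod (2 * η) → ℂ) (i : ZMod η) :
    restr η (dderiv η (dderiv η f)) i = ((η : ℂ) / (2 * π)) ^ 2 *
      (restr η f (i + 1) - 2 * restr η f i + restr η f (i - 1)) := by
  simp only [restr, dderiv_dderiv, natCast_two_mul_val_add_one, natCast_two_mul_val_sub_one]

theorem coarseFourier_dderiv2_general (η : ℕ) (f : ZMod (2 * η) → ℂ)
    (m : ℤ) :
    coarseFourier η (restr η (dderiv η (dderiv η f))) m
      = psiEta η m ^ 2 * UEta η m * coarseFourier η (restr η f) m := by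
  obtain rfl | hη := η.eq_zero_or_pos
  · simp [coarseFourier]
  have : NeZero η := ⟨hη.ne'⟩
  set u := restr η f
  have hw : Complex.exp (2 * π * Complex.I * m / η) = stdAddChar (m : ZMod η) :=
    (stdAddChar_coe m).symm
  have hw0 : stdAddChar (m : ZMod η) ≠ 0 := hw ▸ Complex.exp_ne_zero _
  have hdd : restr η (dderiv η (dderiv η f)) = ((η : ℂ) / (2 * π)) ^ 2 •
      ((fun i => u (i + 1)) - (2 : ℂ) • u + fun i => u (i + -1)) := by
    funext i
    simp only [restr_dderiv_dderiv, Pi.smul_apply, Pi.add_apply, Pi.sub_apply, smul_eq_mul,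
      ← sub_eq_add_neg, u]
  rw [coarseFourier_eq_dft, coarseFourier_eq_dft, hdd, _root_.map_smul, map_add, map_sub,
    _root_.map_smul]
  simp only [Pi.add_apply, Pi.sub_apply, Pi.smul_apply, smul_eq_mul, dft_comp_add_right, one_mul,
    neg_one_mul, AddChar.map_neg_eq_inv, psiEta, UEta, Complex.exp_neg, hw]
  field_simp
  ring

/-- For `−η/2 ≤ m ≤ η/2`, the coarse Fourier coefficient of the
restricted discrete second derivative satisfies
`(f″)‾^(m) = ψ_η(m)²·U_η(m)·(f̄)^(m)`. -/
theorem coarseFourier_dderiv2 (η : ℕ) (hη : 2 ≤ η) (f : ZMod (2 * η) → ℂ)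
    (m : ℤ) (hm : -(η : ℤ) ≤ 2 * m ∧ 2 * m ≤ (η : ℤ)) :
    coarseFourier η (restr η (dderiv η (dderiv η f))) m
      = psiEta η m ^ 2 * UEta η m * coarseFourier η (restr η f) m :=
  coarseFourier_dderiv2_general η f m
end
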